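/- arXiv:2407.21360 — 6 statements merged into one kernel-verified Lean document; each statement's English description precedes it below -/
import Mathlib

section
/- Every 2-colouring of the fan graph F_n has a monochromatic component with at least ⌊√n⌋ vertices. -/
open SimpleGraph

universe u v

/-- The strong product of two simple graphs. -/
def StrongProd {α : Type u} {β : Type v} (G : SimpleGraph α) (H : SimpleGraph β) :
    SimpleGraph (α × β) where
  Adj x y := (x.1 = y.1 ∧ H.Adj x.2 y.2) ∨ (x.2 = y.2 ∧ G.Adj x.1 y.1) ∨
    (G.Adj x.1 y.1 ∧ H.Adj x.2 y.2)
  symm := by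
    constructor
    rintro x y (⟨h1, h2⟩ | ⟨h1, h2⟩ | ⟨h1, h2⟩)
    · exact Or.inl ⟨h1.symm, h2.symm⟩
    · exact Or.inr (Or.inl ⟨h1.symm, h2.symm⟩)
    · exact Or.inr (Or.inr ⟨h1.symm, h2.symm⟩)
  loopless := by
    constructor
    rintro x (⟨h1, h2⟩ | ⟨h1, h2⟩ | ⟨h1, h2⟩)
    · exact h2.ne rfl
    · exact h2.ne rfl
    · exact h1.ne rfl

/-- The fan graph `F_n`: a path on `n` vertices (vertices `1,…,n`) together with
one dominant vertex (vertex `0`) adjacent to all path vertices. -/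
def Fan (n : ℕ) : SimpleGraph (Fin (n + 1)) :=
  SimpleGraph.fromRel (fun u v => u = 0 ∨ u.val + 1 = v.val)

/-- The cone over `m` disjoint copies of `G`: `m` pairwise disjoint copies of `G`
together with one new vertex adjacent to every vertex of every copy. -/
def GraphCone {V : Type u} (m : ℕ) (G : SimpleGraph V) :
    SimpleGraph (Option (Fin m × V)) where
  Adj x y :=
    match x, y with
    | none, none => False
    | none, some _ => True
    | some _, none => True
    | some (i, _u), some (j, _v) => i = j ∧ G.Adj _u _v
  symm := by
    constructor
    rintro (_ | ⟨i, u⟩) (_ | ⟨j, v⟩) h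
    · exact h
    · trivial
    · trivial
    · exact ⟨h.1.symm, h.2.symm⟩
  loopless := by
    constructor
    rintro (_ | ⟨i, u⟩) h
    · exact h
    · exact h.2.ne rfl

/-- `G` has a tree-decomposition of width at most `t`. -/
def TreewidthLE {V : Type u} (G : SimpleGraph V) (t : ℕ) : Prop :=
  ∃ (ι : Type) (T : SimpleGraph ι) (W : ι → Finset V),
    T.IsTree ∧
    (∀ ⦃u v : V⦄, G.Adj u v → ∃ x, u ∈ W x ∧ v ∈ W x) ∧
    (∀ v : V, (T.induce {x | v ∈ W x}).Connected) ∧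
    (∀ x, (W x).card ≤ t + 1)

/-- A set of vertices is monochromatic under a colouring `f`. -/
def IsMonochromatic {V : Type u} {c : ℕ} (f : V → Fin c) (S : Finset V) : Prop :=
  ∀ u ∈ S, ∀ v ∈ S, f u = f v

/-- Every monochromatic component of the colouring `f` of `G` has at most `k` vertices. -/
def ClusterLE {V : Type u} {c : ℕ} (G : SimpleGraph V) (f : V → Fin c) (k : ℕ) : Prop :=
  ∀ S : Finset V, IsMonochromatic f S → (G.induce (S : Set V)).Connected → S.card ≤ k

/-- Every monochromatic component of the colouring `f` of `G` has at most `b` vertices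
(real-valued bound). -/
def ClusterLEReal {V : Type u} {c : ℕ} (G : SimpleGraph V) (f : V → Fin c) (b : ℝ) : Prop :=
  ∀ S : Finset V, IsMonochromatic f S → (G.induce (S : Set V)).Connected → (S.card : ℝ) ≤ b

/-! If the colour class of the centre has at least `s = ⌊√n⌋` vertices, it is connected
through the centre. Otherwise fewer than `s` vertices carry the centre's colour, so one of the
`s` blocks of `s` consecutive path vertices among `1, …, s²` avoids them. With two colours that
block is monochromatic, and it is a subpath, hence connected. -/

open Finset

namespace SimpleGraph

variable {V : Type*} {G : SimpleGraph V}

lemma induce_connected_of_forall_adj {S : Set V} {c : V} (hc : c ∈ S)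
    (h : ∀ v ∈ S, v ≠ c → G.Adj c v) : (G.induce S).Connected := by
  have hreach (v : S) : (G.induce S).Reachable ⟨c, hc⟩ v := by
    obtain ⟨v, hv⟩ := v
    rcases eq_or_ne v c with rfl | hvc
    · rfl
    · exact Adj.reachable (h v hv hvc)
  have : Nonempty S := ⟨⟨c, hc⟩⟩
  exact ⟨fun u v ↦ (hreach u).symm.trans (hreach v)⟩

lemma induce_connected_of_ordConnected [LinearOrder V] [SuccOrder V] [IsSuccArchimedean V]
    (hG : hasse V ≤ G) {S : Set V} [S.OrdConnected] (hS : S.Nonempty) :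
    (G.induce S).Connected := by
  have : Nonempty S := hS.to_subtype
  refine ⟨(hasse_preconnected_of_succ S).mono ?_⟩
  have hrange : (Set.range (OrderEmbedding.subtype (· ∈ S))).OrdConnected :=
    (Subtype.range_coe (s := S)).symm ▸ ‹S.OrdConnected›
  rintro a b (hab | hba)
  · exact hG (.inl (hab.image _ hrange))
  · exact hG (.inr (hba.image _ hrange))

end SimpleGraph

lemma Nat.exists_Ioc_disjoint_of_card_lt {B : Finset ℕ} {s : ℕ} (hB : #B < s) :
    ∃ j < s, Disjoint (Ioc (j * s) (j * s + s)) B := by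
  -- `(b - 1) / s` is the index of the block containing `b`; some index below `s` is missed.
  obtain ⟨j, hj, hjB⟩ := exists_mem_notMem_of_card_lt_card
    ((Finset.card_image_le (f := fun b ↦ (b - 1) / s)).trans_lt (hB.trans_eq (card_range s).symm))
  refine ⟨j, mem_range.mp hj, disjoint_left.mpr fun b hb hbB ↦ hjB (mem_image.mpr ⟨b, hbB, ?_⟩)⟩
  obtain ⟨hlo, hhi⟩ := mem_Ioc.mp hb
  exact Nat.div_eq_of_lt_le (by omega) (by rw [Nat.succ_mul]; omega)

lemma isMonochromatic_of_forall_ne {V : Type*} {f : V → Fin 2} {S : Finset V} {c : Fin 2}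
    (h : ∀ v ∈ S, f v ≠ c) : IsMonochromatic f S := by
  intro u hu v hv
  have := h u hu
  have := h v hv
  omega

lemma fan_adj_of_covBy {n : ℕ} {u v : Fin (n + 1)} (h : u ⋖ v) : (Fan n).Adj u v :=
  (fromRel_adj _ _ _).mpr ⟨h.ne, .inl (.inr (Nat.covBy_iff_add_one_eq.mp (Fin.covBy_iff.mp h)))⟩

lemma hasse_le_fan (n : ℕ) : hasse (Fin (n + 1)) ≤ Fan n := by
  rintro u v (h | h)
  exacts [fan_adj_of_covBy h, (fan_adj_of_covBy h).symm]

lemma fan_adj_zero {n : ℕ} {v : Fin (n + 1)} (hv : v ≠ 0) : (Fan n).Adj 0 v := by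
  simp [Fan, hv.symm]

/-- Every 2-colouring of the fan graph `F_n` has a monochromatic component with at
least `⌊√n⌋` vertices. -/
theorem fan_two_colouring (n : ℕ) (f : Fin (n + 1) → Fin 2) :
    ∃ S : Finset (Fin (n + 1)), IsMonochromatic f S ∧
      ((Fan n).induce (S : Set (Fin (n + 1)))).Connected ∧ Nat.sqrt n ≤ S.card := by
  set s := Nat.sqrt n
  set A : Finset (Fin (n + 1)) := {v | f v = f 0}
  by_cases hA : s ≤ #A
  · refine ⟨A, fun u hu v hv ↦ (mem_filter.mp hu).2.trans (mem_filter.mp hv).2.symm,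
      induce_connected_of_forall_adj (by simp [A]) fun v _ hv ↦ fan_adj_zero hv, hA⟩
  obtain ⟨j, hj, hdisj⟩ :=
    Nat.exists_Ioc_disjoint_of_card_lt (card_image_le.trans_lt (not_le.mp hA) :
      #(A.image Fin.val) < s)
  have hjs : j * s + s ≤ n :=
    (Nat.succ_mul j s ▸ Nat.mul_le_mul_right s hj).trans (Nat.sqrt_le n)
  set S := Ioc (⟨j * s, by omega⟩ : Fin (n + 1)) ⟨j * s + s, by omega⟩
  have hS (v : Fin (n + 1)) (hv : v ∈ S) : f v ≠ f 0 := fun hfv ↦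
    disjoint_left.mp hdisj (by simpa [S, Fin.lt_def, Fin.le_def] using hv)
      (mem_image_of_mem _ (by simpa [A] using hfv))
  have hcard : #S = s := by simp [S, Fin.card_Ioc]
  refine ⟨S, isMonochromatic_of_forall_ne hS, ?_, hcard.ge⟩
  have hne : (S : Set (Fin (n + 1))).Nonempty := coe_nonempty.mpr (card_pos.mp (by omega))
  rw [coe_Ioc] at hne ⊢
  exact induce_connected_of_ordConnected (hasse_le_fan n) hne
end

section
/- For all positive integers c and t, every graph G with treewidth at most t admits a c-colouring in which every monochromatic component has at most (t+1)^{(c-1)/c} · |V(G)|^{1/c} vertices. -/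
/-!
Root a tree-decomposition of width `t` and call a vertex confined to a node `x` if all its bags
lie below `x`. If more than `m` vertices are confined to the root, take a lowest node `x` with
this property: its bag `X` separates the vertices confined to `x` from the rest, and every
component of them minus `X` is confined to one child of `x`, hence has at most `m` vertices.
Deleting the confined vertices and recursing with `m = (t+1)n/p` spends at most `t + 1` on each
bag while removing more than `m` vertices, which gives the separator lemma.

With `k + 1` colours, when every component has at most `(t+1)x` vertices, give the last colour to
a separator of size `p = (t+1)x^{1/(k+1)}` of each component. The rest has components of at most
`(t+1)²x/p = (t+1)x^{k/(k+1)}` vertices, and `k` colours handle it by induction, because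
`(x^{k/(k+1)})^{1/k} = x^{1/(k+1)}`. For `x = n/(t+1)` the bound `(t+1)x^{1/c}` is the claimed one.
-/

open SimpleGraph

universe u v

open Finset

namespace SimpleGraph

variable {V : Type*} {G : SimpleGraph V}

theorem Preconnected.forall_of_adj (hG : G.Preconnected) {P : V → Prop}
    (hP : ∀ ⦃u v⦄, G.Adj u v → P u → P v) {u : V} (hu : P u) (v : V) : P v := by
  obtain ⟨p⟩ := hG u v
  induction p with
  | nil => exact hu
  | cons h _ ih => exact ih (hP h hu)

theorem subset_or_disjoint_of_connected_induce {C K U : Finset V}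
    (hC : (G.induce (C : Set V)).Connected) (hCU : C ⊆ U)
    (hK : ∀ a ∈ K, ∀ b ∈ U, G.Adj a b → b ∈ K) : C ⊆ K ∨ Disjoint C K := by
  by_cases hmeet : ∃ v ∈ C, v ∈ K
  · obtain ⟨v, hvC, hvK⟩ := hmeet
    left
    intro w hwC
    exact hC.preconnected.forall_of_adj (P := fun z => z.1 ∈ K)
      (fun a b hab ha => hK a ha b (hCU b.2) hab) (u := ⟨v, hvC⟩) hvK ⟨w, hwC⟩
  · exact Or.inr (Finset.disjoint_left.mpr fun v hvC hvK => hmeet ⟨v, hvC, hvK⟩)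

theorem exists_connected_induce_closed_subset {U : Finset V} (hU : U.Nonempty) :
    ∃ K ⊆ U, (G.induce (K : Set V)).Connected ∧ ∀ a ∈ K, ∀ b ∈ U, G.Adj a b → b ∈ K := by
  classical
  obtain ⟨v, hv⟩ := hU
  have hsingleton :
      {v} ∈ U.powerset.filter fun K : Finset V => (G.induce (K : Set V)).Connected := by
    rw [Finset.mem_filter, Finset.mem_powerset, Finset.coe_singleton, induce_singleton_eq_top]
    exact ⟨Finset.singleton_subset_iff.mpr hv, connected_top⟩
  obtain ⟨K, hK, hmax⟩ := Finset.exists_max_image _ Finset.card ⟨_, hsingleton⟩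
  rw [Finset.mem_filter, Finset.mem_powerset] at hK
  refine ⟨K, hK.1, hK.2, fun a ha b hb hab => ?_⟩
  by_contra hbK
  have hinsert : (G.induce ((insert b K : Finset V) : Set V)).Connected := by
    rw [Finset.coe_insert, Set.insert_eq, Set.union_comm]
    refine connected_induce_union hK.2.preconnected ?_ ha rfl hab
    simp [induce_singleton_eq_top, preconnected_top]
  have := hmax (insert b K) (by simp [Finset.insert_subset_iff, hb, hK.1, hinsert])
  rw [Finset.card_insert_of_notMem hbK] at this
  omega

variable {ι : Type*} {T : SimpleGraph ι}

def ReachableAvoiding (T : SimpleGraph ι) (x a b : ι) : Prop :=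
  ∃ q : T.Walk a b, x ∉ q.support

namespace ReachableAvoiding

variable {x a b c : ι}

theorem symm (h : T.ReachableAvoiding x a b) : T.ReachableAvoiding x b a := by
  obtain ⟨q, hq⟩ := h
  exact ⟨q.reverse, by rwa [Walk.support_reverse, List.mem_reverse]⟩

theorem trans (hab : T.ReachableAvoiding x a b) (hbc : T.ReachableAvoiding x b c) :
    T.ReachableAvoiding x a c := by
  obtain ⟨q, hq⟩ := hab
  obtain ⟨q', hq'⟩ := hbc
  exact ⟨q.append q', by rw [Walk.mem_support_append_iff]; tauto⟩

theorem concat (h : T.ReachableAvoiding x a b) (hbc : T.Adj b c) (hcx : c ≠ x) :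
    T.ReachableAvoiding x a c := by
  obtain ⟨q, hq⟩ := h
  refine ⟨q.concat hbc, ?_⟩
  rw [Walk.support_concat, List.mem_append, List.mem_singleton]
  exact fun h => h.elim hq hcx.symm

end ReachableAvoiding

theorem Connected.exists_adj_reachableAvoiding (hT : T.Connected) {x b : ι} (hbx : b ≠ x) :
    ∃ y, T.Adj x y ∧ T.ReachableAvoiding x b y := by
  obtain ⟨p, hp⟩ := hT.exists_isPath x b
  cases p with
  | nil => exact absurd rfl hbx
  | cons hxy q =>
    rw [Walk.cons_isPath_iff] at hp
    exact ⟨_, hxy, ReachableAvoiding.symm ⟨q, hp.2⟩⟩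

theorem Connected.reachableAvoiding_or (hT : T.Connected) {x y : ι} (hxy : x ≠ y) (z : ι) :
    T.ReachableAvoiding y z x ∨ T.ReachableAvoiding x z y := by
  classical
  obtain ⟨p, hp⟩ := hT.exists_isPath z x
  by_cases hy : y ∈ p.support
  · exact Or.inr ⟨p.takeUntil y hy, Walk.endpoint_notMem_support_takeUntil hp hy hxy⟩
  · exact Or.inl ⟨p, hy⟩

theorem IsAcyclic.not_reachableAvoiding (hT : T.IsAcyclic) {x y b : ι} (hxy : T.Adj x y)
    (hyb : T.ReachableAvoiding x y b) : ¬ T.ReachableAvoiding y b x := by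
  rintro ⟨q', hq'⟩
  obtain ⟨q, hq⟩ := hyb
  have hbridge := isBridge_iff.mp (isAcyclic_iff_forall_adj_isBridge.mp hT hxy.symm)
  have hedge := (q.append q').mem_edges_of_not_reachable_deleteEdges hbridge
  rw [Walk.edges_append, List.mem_append] at hedge
  rcases hedge with h | h
  · exact hq (q.snd_mem_support_of_mem_edges h)
  · exact hq' (q'.fst_mem_support_of_mem_edges h)

def rootedSubtree (T : SimpleGraph ι) (r x : ι) : Set ι :=
  {z | ¬ T.ReachableAvoiding x z r}

variable {r x y z : ι}

theorem self_mem_rootedSubtree : x ∈ T.rootedSubtree r x :=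
  fun ⟨q, hq⟩ => hq q.start_mem_support

theorem mem_rootedSubtree_root : z ∈ T.rootedSubtree r r :=
  fun ⟨q, hq⟩ => hq q.end_mem_support

theorem mem_rootedSubtree_of_reachableAvoiding {b : ι} (hz : z ∈ T.rootedSubtree r x)
    (hzb : T.ReachableAvoiding x z b) : b ∈ T.rootedSubtree r x :=
  fun hb => hz (hzb.trans hb)

theorem rootedSubtree_subset (hy : y ∈ T.rootedSubtree r x) :
    T.rootedSubtree r y ⊆ T.rootedSubtree r x := by
  classical
  rintro z hz ⟨q, hq⟩
  have hyq : y ∈ q.support := by_contra fun h => hz ⟨q, h⟩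
  exact hy ⟨q.dropUntil y hyq, fun h => hq (q.support_dropUntil_subset_support hyq h)⟩

theorem Connected.rootedSubtree_ssubset (hT : T.Connected) (hxy : T.Adj x y)
    (hy : y ∈ T.rootedSubtree r x) : T.rootedSubtree r y ⊂ T.rootedSubtree r x := by
  refine (Set.ssubset_iff_of_subset (rootedSubtree_subset hy)).mpr
    ⟨x, self_mem_rootedSubtree, fun hx => ?_⟩
  rcases hT.reachableAvoiding_or hxy.ne r with h | h
  · exact hx h.symm
  · exact hy h.symm

theorem IsAcyclic.mem_rootedSubtree_of_adj (hT : T.IsAcyclic) (hxy : T.Adj x y) {b : ι}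
    (hb : b ∈ T.rootedSubtree r x) (hby : T.ReachableAvoiding x b y) :
    b ∈ T.rootedSubtree r y := by
  classical
  rintro ⟨q, hq⟩
  have hxq : x ∈ q.support := by_contra fun h => hb ⟨q, h⟩
  exact hT.not_reachableAvoiding hxy hby.symm
    ⟨q.takeUntil x hxq, fun h => hq (q.support_takeUntil_subset_support hxq h)⟩

end SimpleGraph

section TreeDecomposition

open SimpleGraph

variable {V ι : Type*} {G : SimpleGraph V} {T : SimpleGraph ι} {W : ι → Finset V}

open Classical in
noncomputable def confinedVertices (W : ι → Finset V) (U : Finset V) (D : Set ι) : Finset V :=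
  U.filter fun v => ∀ y, v ∈ W y → y ∈ D

theorem mem_confinedVertices {U : Finset V} {D : Set ι} {v : V} :
    v ∈ confinedVertices W U D ↔ v ∈ U ∧ ∀ y, v ∈ W y → y ∈ D := by
  classical
  simp [confinedVertices]

theorem reachableAvoiding_of_mem_bags {v : V} (hv : (T.induce {y | v ∈ W y}).Connected) {x a b : ι}
    (hvx : v ∉ W x) (ha : v ∈ W a) (hb : v ∈ W b) : T.ReachableAvoiding x a b := by
  have hxa : x ≠ a := fun h => hvx (h ▸ ha)
  exact hv.preconnected.forall_of_adj (P := fun z => T.ReachableAvoiding x a z.1)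
    (fun _ w huw hu => hu.concat huw fun h => hvx (h ▸ w.2)) (u := ⟨a, ha⟩)
    ⟨.nil, by simpa using hxa⟩ ⟨b, hb⟩

variable (hedge : ∀ ⦃u v : V⦄, G.Adj u v → ∃ x, u ∈ W x ∧ v ∈ W x)
  (hconn : ∀ v : V, (T.induce {x | v ∈ W x}).Connected)
include hconn

theorem finite_setOf_confinedVertices_nonempty (hT : T.Connected) (U : Finset V) (r : ι) :
    {x | (confinedVertices W U (T.rootedSubtree r x)).Nonempty}.Finite := by
  classical
  have hbag : ∀ v, ∃ x, v ∈ W x := fun v =>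
    let ⟨⟨x, hx⟩⟩ := (hconn v).nonempty
    ⟨x, hx⟩
  choose β hβ using hbag
  let p := fun v => (hT.preconnected (β v) r).some
  refine (U.finite_toSet.biUnion fun v _ => (p v).support.toFinset.finite_toSet).subset ?_
  rintro x ⟨v, hv⟩
  rw [mem_confinedVertices] at hv
  have hxp : x ∈ (p v).support := by_contra fun h => hv.2 _ (hβ v) ⟨p v, h⟩
  simp only [Set.mem_iUnion]
  exact ⟨v, hv.1, by simpa using hxp⟩

include hedge

theorem mem_confinedVertices_of_adj {U : Finset V} {r x : ι} {a b : V}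
    (ha : a ∈ confinedVertices W U (T.rootedSubtree r x)) (hb : b ∈ U) (hbx : b ∉ W x)
    (hab : G.Adj a b) : b ∈ confinedVertices W U (T.rootedSubtree r x) := by
  rw [mem_confinedVertices] at ha ⊢
  obtain ⟨z, haz, hbz⟩ := hedge hab
  exact ⟨hb, fun y hby => mem_rootedSubtree_of_reachableAvoiding (ha.2 z haz)
    (reachableAvoiding_of_mem_bags (hconn b) hbx hbz hby)⟩

theorem exists_adj_subset_confinedVertices (hT : T.IsTree) {U C : Finset V} {r x : ι}
    (hC : C ⊆ confinedVertices W U (T.rootedSubtree r x)) (hCx : ∀ v ∈ C, v ∉ W x)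
    (hCconn : (G.induce (C : Set V)).Connected) :
    ∃ y, T.Adj x y ∧ y ∈ T.rootedSubtree r x ∧
      C ⊆ confinedVertices W U (T.rootedSubtree r y) := by
  obtain ⟨⟨v₀, hv₀⟩⟩ := hCconn.nonempty
  obtain ⟨⟨b₀, hb₀⟩⟩ := (hconn v₀).nonempty
  have hb₀x : b₀ ≠ x := fun h => hCx v₀ hv₀ (h ▸ hb₀)
  obtain ⟨y, hxy, hb₀y⟩ := hT.connected.exists_adj_reachableAvoiding hb₀x
  -- the bags of a vertex outside `W x` span a subtree missing `x`, so `hb₀y` spreads along `C`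
  have hreach : ∀ v ∈ C, ∀ b, v ∈ W b → T.ReachableAvoiding x b y := by
    intro v hv
    refine hCconn.preconnected.forall_of_adj
      (P := fun w => ∀ b, w.1 ∈ W b → T.ReachableAvoiding x b y) ?_ (u := ⟨v₀, hv₀⟩) ?_ ⟨v, hv⟩
    · rintro u ⟨w, hw⟩ huw hu b hwb
      obtain ⟨z, huz, hwz⟩ := hedge huw
      exact (reachableAvoiding_of_mem_bags (hconn w) (hCx w hw) hwb hwz).trans (hu z huz)
    · exact fun b hb => (reachableAvoiding_of_mem_bags (hconn v₀) (hCx v₀ hv₀) hb hb₀).trans hb₀y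
  have hconf := fun v (hv : v ∈ C) => mem_confinedVertices.mp (hC hv)
  refine ⟨y, hxy, mem_rootedSubtree_of_reachableAvoiding ((hconf v₀ hv₀).2 b₀ hb₀) hb₀y,
    fun v hv => mem_confinedVertices.mpr ⟨(hconf v hv).1, fun b hb => ?_⟩⟩
  exact hT.isAcyclic.mem_rootedSubtree_of_adj hxy ((hconf v hv).2 b hb) (hreach v hv b hb)

end TreeDecomposition

namespace TreewidthLE

variable {V : Type*} [DecidableEq V] {G : SimpleGraph V} {t : ℕ}

theorem exists_bag_separating_piece (hG : TreewidthLE G t) (U : Finset V) {m : ℝ} (hm : 0 ≤ m)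
    (hU : m < #U) :
    ∃ A X : Finset V, A ⊆ U ∧ X ⊆ U ∧ #X ≤ t + 1 ∧ m < #A ∧
      (∀ a ∈ A, ∀ b ∈ U \ X, G.Adj a b → b ∈ A) ∧
      ∀ C ⊆ A \ X, (G.induce (C : Set V)).Connected → #C ≤ m := by
  obtain ⟨ι, T, W, hT, hedge, hconn, hcard⟩ := hG
  obtain ⟨r⟩ := hT.connected.nonempty
  set A := fun x => confinedVertices W U (T.rootedSubtree r x)
  set K := {x | m < #(A x)}
  have hK : K.Finite := (finite_setOf_confinedVertices_nonempty hconn hT.connected U r).subset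
    fun x hx => Finset.card_pos.mp (by exact_mod_cast hm.trans_lt hx)
  have hrK : r ∈ K := by
    have hAr : A r = U := Finset.ext fun _ =>
      mem_confinedVertices.trans (and_iff_left fun _ _ => mem_rootedSubtree_root)
    simpa [K, hAr] using hU
  obtain ⟨x, hxK, hxmin⟩ := hK.exists_minimalFor (T.rootedSubtree r) K ⟨r, hrK⟩
  refine ⟨A x, W x ∩ U, fun v hv => (mem_confinedVertices.mp hv).1, Finset.inter_subset_right,
    (Finset.card_le_card Finset.inter_subset_left).trans (hcard x), hxK, ?_, ?_⟩
  · intro a ha b hb hab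
    rw [Finset.mem_sdiff, Finset.mem_inter] at hb
    exact mem_confinedVertices_of_adj hedge hconn ha hb.1 (fun h => hb.2 ⟨h, hb.1⟩) hab
  · intro C hC hCconn
    have hCA : C ⊆ A x := fun v hv => (Finset.mem_sdiff.mp (hC hv)).1
    have hCx : ∀ v ∈ C, v ∉ W x := fun v hv h => (Finset.mem_sdiff.mp (hC hv)).2
      (Finset.mem_inter.mpr ⟨h, (mem_confinedVertices.mp (hCA hv)).1⟩)
    obtain ⟨y, hxy, hy, hCy⟩ := exists_adj_subset_confinedVertices hedge hconn hT hCA hCx hCconn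
    have hssub := hT.connected.rootedSubtree_ssubset hxy hy
    have hyK : y ∉ K := fun hyK => hssub.not_subset (hxmin hyK hssub.subset)
    calc (#C : ℝ) ≤ #(A y) := by exact_mod_cast Finset.card_le_card hCy
      _ ≤ m := not_lt.mp hyK

theorem exists_separator (hG : TreewidthLE G t) (U : Finset V) {p : ℝ} (hp : 0 < p) :
    ∃ S ⊆ U, #S ≤ p ∧
      ∀ C ⊆ U \ S, (G.induce (C : Set V)).Connected → #C ≤ (t + 1) * #U / p := by
  induction U using Finset.strongInduction generalizing p with
  | H U ih =>
  set m : ℝ := (t + 1) * #U / p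
  by_cases hsmall : (#U : ℝ) ≤ m
  · refine ⟨∅, Finset.empty_subset U, by simpa using hp.le, fun C hC _ => ?_⟩
    exact le_trans (by exact_mod_cast Finset.card_le_card (hC.trans Finset.sdiff_subset)) hsmall
  rw [not_le] at hsmall
  have hm : 0 ≤ m := by positivity
  obtain ⟨A, X, hAU, hXU, hX, hA, hAclosed, hAsmall⟩ := hG.exists_bag_separating_piece U hm hsmall
  have hpt : (t : ℝ) + 1 < p := by
    by_contra! h
    exact hsmall.not_ge ((le_div_iff₀ hp).mpr (by nlinarith [(#U).cast_nonneg (α := ℝ)]))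
  have hAne : A.Nonempty := Finset.card_pos.mp (by exact_mod_cast hm.trans_lt hA)
  obtain ⟨S, hSU, hS, hSsmall⟩ :=
    ih (U \ A) (Finset.sdiff_ssubset hAU hAne) (p := p - (t + 1)) (by linarith)
  refine ⟨X ∪ S, Finset.union_subset hXU (hSU.trans Finset.sdiff_subset), ?_, ?_⟩
  · calc (#(X ∪ S) : ℝ) ≤ #X + #S := by exact_mod_cast Finset.card_union_le X S
      _ ≤ (t + 1) + (p - (t + 1)) := add_le_add (by exact_mod_cast hX) hS
      _ = p := by ring
  intro C hC hCconn
  have hCUX : C ⊆ U \ X := fun v hv => by grind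
  rcases subset_or_disjoint_of_connected_induce hCconn hCUX hAclosed with hCA | hCA
  · exact hAsmall C (fun v hv => by grind) hCconn
  have hCS : C ⊆ (U \ A) \ S := fun v hv => by grind [Finset.disjoint_left]
  -- the part cut off has more than `m` vertices, which pays for the `t + 1` spent on `X`
  calc (#C : ℝ) ≤ (t + 1) * #(U \ A) / (p - (t + 1)) := hSsmall C hCS hCconn
    _ ≤ m := by
      rw [Finset.card_sdiff_of_subset hAU, Nat.cast_sub (Finset.card_le_card hAU),
        div_le_div_iff₀ (by linarith) hp]
      have : (t + 1) * #U < #A * p := by rwa [div_lt_iff₀ hp] at hA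
      nlinarith

theorem exists_separator_of_forall_card_le (hG : TreewidthLE G t) (U : Finset V) {N p : ℝ}
    (hp : 0 < p) (hU : ∀ C ⊆ U, (G.induce (C : Set V)).Connected → #C ≤ N) :
    ∃ S ⊆ U, (∀ C ⊆ S, (G.induce (C : Set V)).Connected → #C ≤ p) ∧
      ∀ C ⊆ U \ S, (G.induce (C : Set V)).Connected → #C ≤ (t + 1) * N / p := by
  induction U using Finset.strongInduction with
  | H U ih =>
  rcases U.eq_empty_or_nonempty with rfl | hUne
  · refine ⟨∅, le_rfl, fun C hC hCconn => ?_, fun C hC hCconn => ?_⟩ <;>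
    · obtain ⟨⟨v, hv⟩⟩ := hCconn.nonempty
      simpa using hC hv
  obtain ⟨K, hKU, hKconn, hKclosed⟩ := exists_connected_induce_closed_subset (G := G) hUne
  obtain ⟨SK, hSKK, hSK, hSKsmall⟩ := hG.exists_separator K hp
  obtain ⟨⟨v, hv⟩⟩ := hKconn.nonempty
  obtain ⟨S, hSU, hSsmall, hSrest⟩ := ih (U \ K) (Finset.sdiff_ssubset hKU ⟨v, hv⟩)
    fun C hC => hU C (hC.trans Finset.sdiff_subset)
  refine ⟨SK ∪ S, Finset.union_subset (hSKK.trans hKU) (hSU.trans Finset.sdiff_subset), ?_, ?_⟩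
  · intro C hC hCconn
    rcases subset_or_disjoint_of_connected_induce hCconn (fun v hv => by grind) hKclosed
      with hCK | hCK
    · exact le_trans (by exact_mod_cast Finset.card_le_card fun v hv => by grind) hSK
    · exact hSsmall C (fun v hv => by grind [Finset.disjoint_left]) hCconn
  · intro C hC hCconn
    rcases subset_or_disjoint_of_connected_induce hCconn (fun v hv => by grind) hKclosed
      with hCK | hCK
    · refine (hSKsmall C (fun v hv => by grind) hCconn).trans ?_
      gcongr
      exact hU K hKU hKconn
    · exact hSrest C (fun v hv => by grind [Finset.disjoint_left]) hCconn

theorem exists_colouring (hG : TreewidthLE G t) {k : ℕ} (hk : 0 < k) (U : Finset V) {x : ℝ}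
    (hx : 0 ≤ x) (hU : ∀ C ⊆ U, (G.induce (C : Set V)).Connected → #C ≤ (t + 1) * x) :
    ∃ f : V → Fin k, ∀ C ⊆ U, IsMonochromatic f C → (G.induce (C : Set V)).Connected →
      #C ≤ (t + 1) * x ^ (1 / k : ℝ) := by
  induction k, hk using Nat.le_induction generalizing U x with
  | base => exact ⟨fun _ => 0, fun C hCU _ hC => by simpa using hU C hCU hC⟩
  | succ k hk ih =>
  push_cast
  rcases hx.eq_or_lt with rfl | hxpos
  · refine ⟨fun _ => 0, fun C hCU _ hC => ?_⟩
    rw [Real.zero_rpow (by positivity)]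
    exact hU C hCU hC
  have hp : 0 < (t + 1 : ℝ) * x ^ (1 / (k + 1) : ℝ) := by positivity
  obtain ⟨S, hSU, hS, hrest⟩ := hG.exists_separator_of_forall_card_le U hp hU
  have hpieces : (t + 1) * ((t + 1) * x) / ((t + 1) * x ^ (1 / (k + 1) : ℝ)) =
      (t + 1) * x ^ (k / (k + 1) : ℝ) := by
    have hk1 : (k / (k + 1) : ℝ) = 1 - 1 / (k + 1) := by field_simp; ring
    rw [hk1, Real.rpow_sub hxpos, Real.rpow_one]
    field_simp
  have hbound :
      (t + 1) * (x ^ (k / (k + 1) : ℝ)) ^ (1 / k : ℝ) = (t + 1) * x ^ (1 / (k + 1) : ℝ) := by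
    rw [← Real.rpow_mul hx]
    congr 2
    field_simp
  obtain ⟨g, hg⟩ := ih (U \ S) (x := x ^ (k / (k + 1) : ℝ)) (by positivity)
    fun C hC hCconn => hpieces ▸ hrest C hC hCconn
  refine ⟨fun v => if v ∈ S then Fin.last k else (g v).castSucc, fun C hCU hmono hCconn => ?_⟩
  by_cases hCS : ∃ v ∈ C, v ∈ S
  · obtain ⟨v, hvC, hvS⟩ := hCS
    refine hS C (fun w hw => ?_) hCconn
    by_contra hwS
    simpa [hwS, hvS, Fin.castSucc_ne_last] using hmono w hw v hvC
  · push Not at hCS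
    rw [← hbound]
    refine hg C (fun w hw => by grind) (fun u hu w hw => ?_) hCconn
    simpa [hCS u hu, hCS w hw] using hmono u hu w hw

end TreewidthLE

theorem tw_colouring_general (c t : ℕ) (hc : 0 < c) {V : Type} [Fintype V]
    (G : SimpleGraph V) (hG : TreewidthLE G t) :
    ∃ f : V → Fin c, ClusterLEReal G f
      (((t : ℝ) + 1) ^ (((c : ℝ) - 1) / (c : ℝ)) *
        (Fintype.card V : ℝ) ^ ((1 : ℝ) / (c : ℝ))) := by
  classical
  have hn : (0 : ℝ) ≤ Fintype.card V / (t + 1) := by positivity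
  obtain ⟨f, hf⟩ := hG.exists_colouring hc Finset.univ hn fun C _ _ => by
    rw [mul_div_cancel₀ _ (by positivity)]
    exact_mod_cast Finset.card_le_univ C
  refine ⟨f, fun C hmono hconn => (hf C (Finset.subset_univ C) hmono hconn).trans_eq ?_⟩
  have hc' : ((c : ℝ) - 1) / c = 1 - 1 / c := by field_simp
  rw [Real.div_rpow (by positivity) (by positivity), hc', Real.rpow_sub (by positivity),
    Real.rpow_one]
  ring

/-- Every graph of treewidth at most `t` has a `c`-colouring with every monochromatic
component of size at most `(t+1)^{(c-1)/c} · n^{1/c}`. -/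
theorem tw_colouring (c t : ℕ) (hc : 0 < c) (ht : 0 < t) {V : Type} [Fintype V]
    (G : SimpleGraph V) (hG : TreewidthLE G t) :
    ∃ f : V → Fin c, ClusterLEReal G f
      (((t : ℝ) + 1) ^ (((c : ℝ) - 1) / (c : ℝ)) *
        (Fintype.card V : ℝ) ^ ((1 : ℝ) / (c : ℝ))) :=
  tw_colouring_general c t hc G hG
end

section
/- Every 3-colouring of F_n ⊠ F_n (the strong product of two fans on n+1 vertices) has a monochromatic component with at least (1 − 1/√2)·n vertices. -/
open SimpleGraph

universe u v

/-!
Suppose every monochromatic component has at most `b` vertices and write `N = n + 1`. The colour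
class of the apex `(0, 0)` is connected through it, so it has at most `b` vertices and the other
two colours fill all but `b` positions of the apex row `{0} × F_n` and of the apex column
`F_n × {0}`. Each `(0, j)` with `j ≠ 0` is adjacent to each `(i, 0)` with `i ≠ 0`, so a colour
occupying both has at most `b` vertices there; hence one colour `x` fills at least `N - b`
positions `K` of the apex row and the other colour `y` at least `N - b` positions `I` of the apex
column. An `x`-vertex in a column of `K` is joined through the apex row to the maximal run of `K`
containing that column, and there are at most `N - |K|` runs, so there are at most `(N - |K|) b`
such vertices; symmetrically for `y`. Every vertex of `I × K` is coloured by `f (0, 0)`, `x` or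
`y`, so `|I| |K| ≤ b + (N - |K|) b + (N - |I|) b`, which forces `(N - b)² ≤ 2 b² + b`. This fails
for `b = (1 - 1/√2) n`.
-/

open Finset Fin.NatCast

namespace SimpleGraph

variable {V : Type*} {G : SimpleGraph V} {S : Set V}

theorem induce_connected_of_forall_adj_s7 {z : V} (hz : z ∈ S)
    (hadj : ∀ v ∈ S, v ≠ z → G.Adj v z) : (G.induce S).Connected := by
  rw [connected_iff_exists_forall_reachable]
  refine ⟨⟨z, hz⟩, fun ⟨v, hv⟩ => ?_⟩
  by_cases hvz : v = z
  · subst hvz; rfl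
  · exact (show (G.induce S).Adj ⟨v, hv⟩ ⟨z, hz⟩ from hadj v hv hvz).reachable.symm

theorem induce_connected_of_forall_adj_of_not (p : V → Prop) (hp : ∃ u ∈ S, p u)
    (hnp : ∃ w ∈ S, ¬p w) (hadj : ∀ u ∈ S, ∀ w ∈ S, p u → ¬p w → G.Adj u w) :
    (G.induce S).Connected := by
  obtain ⟨u₀, hu₀, pu₀⟩ := hp
  obtain ⟨w₀, hw₀, npw₀⟩ := hnp
  rw [connected_iff_exists_forall_reachable]
  refine ⟨⟨u₀, hu₀⟩, fun ⟨v, hv⟩ => ?_⟩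
  have hu₀w₀ : (G.induce S).Adj ⟨u₀, hu₀⟩ ⟨w₀, hw₀⟩ := hadj u₀ hu₀ w₀ hw₀ pu₀ npw₀
  by_cases pv : p v
  · exact hu₀w₀.reachable.trans
      (show (G.induce S).Adj ⟨v, hv⟩ ⟨w₀, hw₀⟩ from hadj v hv w₀ hw₀ pv npw₀).reachable.symm
  · exact (show (G.induce S).Adj ⟨u₀, hu₀⟩ ⟨v, hv⟩ from hadj u₀ hu₀ v hv pu₀ pv).reachable

theorem induce_connected_of_exists_adj_lt (hS : S.Nonempty) (z : V) (h : V → ℕ)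
    (hdesc : ∀ v ∈ S, v ≠ z → ∃ w ∈ S, G.Adj v w ∧ h w < h v) :
    (G.induce S).Connected := by
  have hreach : ∀ v (hv : v ∈ S), ∃ hz : z ∈ S, (G.induce S).Reachable ⟨z, hz⟩ ⟨v, hv⟩ := by
    intro v
    induction v using (measure h).wf.induction with
    | _ v ih =>
      intro hv
      by_cases hvz : v = z
      · subst hvz; exact ⟨hv, .refl _⟩
      · obtain ⟨w, hw, hvw, hlt⟩ := hdesc v hv hvz
        obtain ⟨hz, hzw⟩ := ih w hlt hw
        exact ⟨hz, hzw.trans (show (G.induce S).Adj ⟨v, hv⟩ ⟨w, hw⟩ from hvw).reachable.symm⟩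
  obtain ⟨v₀, hv₀⟩ := hS
  obtain ⟨hz, -⟩ := hreach v₀ hv₀
  exact (connected_iff_exists_forall_reachable _).2 ⟨⟨z, hz⟩, fun ⟨v, hv⟩ => (hreach v hv).2⟩

theorem Iso.induce_image_connected {W : Type*} {H : SimpleGraph W} (φ : G ≃g H)
    (hS : (G.induce S).Connected) : (H.induce (φ '' S)).Connected :=
  hS.map (induceHom φ.toHom (Set.mapsTo_image φ S)) fun ⟨_, v, hv, rfl⟩ => ⟨⟨v, hv⟩, rfl⟩

end SimpleGraph

namespace StrongProd

variable {α β : Type*} {G : SimpleGraph α} {H : SimpleGraph β}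

theorem adj_right (a : α) {b b' : β} (h : H.Adj b b') : (StrongProd G H).Adj (a, b) (a, b') :=
  Or.inl ⟨rfl, h⟩

theorem adj_left {a a' : α} (h : G.Adj a a') (b : β) : (StrongProd G H).Adj (a, b) (a', b) :=
  Or.inr (Or.inl ⟨rfl, h⟩)

theorem adj_diag {a a' : α} {b b' : β} (ha : G.Adj a a') (hb : H.Adj b b') :
    (StrongProd G H).Adj (a, b) (a', b') :=
  Or.inr (Or.inr ⟨ha, hb⟩)

theorem adj_of_dominant {u : α} {w : β} (hu : ∀ a ≠ u, G.Adj u a) (hw : ∀ b ≠ w, H.Adj w b)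
    {v : α × β} (hv : v ≠ (u, w)) : (StrongProd G H).Adj (u, w) v := by
  obtain ⟨a, b⟩ := v
  by_cases ha : a = u
  · subst ha
    exact adj_right a (hw b fun hb => hv (by rw [hb]))
  · by_cases hb : b = w
    · subst hb
      exact adj_left (hu a ha) b
    · exact adj_diag (hu a ha) (hw b hb)

variable (G H) in
def comm : StrongProd G H ≃g StrongProd H G where
  toEquiv := Equiv.prodComm α β
  map_rel_iff' := by
    rintro ⟨a, b⟩ ⟨a', b'⟩
    simp only [StrongProd, Equiv.prodComm_apply, Prod.swap_prod_mk]
    tauto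

end StrongProd

namespace Fan

variable {n : ℕ}

theorem adj_zero {j : Fin (n + 1)} (hj : j ≠ 0) : (Fan n).Adj 0 j :=
  (fromRel_adj _ _ _).2 ⟨hj.symm, Or.inl (Or.inl rfl)⟩

theorem adj_of_val_succ {a b : Fin (n + 1)} (h : a.val + 1 = b.val) : (Fan n).Adj a b :=
  (fromRel_adj _ _ _).2 ⟨fun hab => by subst hab; omega, Or.inl (Or.inr h)⟩

end Fan

namespace ClusterLEReal

variable {V W : Type*} {G : SimpleGraph V} {c : ℕ} {f : V → Fin c} {b : ℝ}

theorem comp_iso (h : ClusterLEReal G f b) {H : SimpleGraph W} (φ : H ≃g G) :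
    ClusterLEReal H (f ∘ φ) b := by
  intro S hS hconn
  have hmono : IsMonochromatic f (S.map φ.toEquiv.toEmbedding) := by
    simp only [IsMonochromatic, forall_mem_map]
    exact fun u hu v hv => hS u hu v hv
  have hconn' : (G.induce (S.map φ.toEquiv.toEmbedding : Set V)).Connected := by
    rw [coe_map]
    exact φ.induce_image_connected hconn
  simpa using h _ hmono hconn'

theorem comp_injective (h : ClusterLEReal G f b) {d : ℕ} {σ : Fin c → Fin d}
    (hσ : Function.Injective σ) : ClusterLEReal G (σ ∘ f) b :=
  fun S hS hconn => h S (fun u hu v hv => hσ (hS u hu v hv)) hconn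

theorem card_le_card_image_mul (h : ClusterLEReal G f b) {s : Finset V}
    (hs : IsMonochromatic f s) {ι : Type*} [DecidableEq ι] (g : V → ι)
    (hg : ∀ r ∈ s.image g, (G.induce (s.filter (g · = r) : Set V)).Connected) :
    (#s : ℝ) ≤ #(s.image g) * b := by
  rw [card_eq_sum_card_image g s, Nat.cast_sum, ← nsmul_eq_mul, ← sum_const]
  exact sum_le_sum fun r hr =>
    h _ (fun u hu v hv => hs u (mem_filter.1 hu).1 v (mem_filter.1 hv).1) (hg r hr)

end ClusterLEReal

local notation "𝔾" m => StrongProd (Fan m) (Fan m)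

section Runs

variable {n c : ℕ} {f : Fin (n + 1) × Fin (n + 1) → Fin c} {x : Fin c}

/-- The last position `t ≤ j` with `f (0, t) ≠ x`. When `f (0, 0) ≠ x`, the fibres of `runBase f x`
over the positions `j` with `f (0, j) = x` are the maximal runs of consecutive such positions. -/
def runBase (f : Fin (n + 1) × Fin (n + 1) → Fin c) (x : Fin c) (j : Fin (n + 1)) : ℕ :=
  Nat.findGreatest (fun t : ℕ => f (0, (t : Fin (n + 1))) ≠ x) j

theorem runBase_le (j : Fin (n + 1)) : runBase f x j ≤ j :=
  Nat.findGreatest_le _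

theorem apex_runBase_ne (hx : x ≠ f (0, 0)) (j : Fin (n + 1)) :
    f (0, (runBase f x j : Fin (n + 1))) ≠ x :=
  Nat.findGreatest_spec (P := fun t : ℕ => f (0, (t : Fin (n + 1))) ≠ x) (Nat.zero_le _)
    (by simpa using hx.symm)

theorem runBase_lt (hx : x ≠ f (0, 0)) {j : Fin (n + 1)} (hj : f (0, j) = x) :
    runBase f x j < j :=
  (runBase_le j).lt_of_ne fun h => apex_runBase_ne hx j (by rwa [h, Fin.cast_val_eq_self])

theorem exists_pred_runBase (hx : x ≠ f (0, 0)) {m : Fin (n + 1)} (hm : f (0, m) = x)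
    (hne : (m : ℕ) ≠ runBase f x m + 1) :
    ∃ m' : Fin (n + 1), (m' : ℕ) + 1 = m ∧ f (0, m') = x ∧ runBase f x m' = runBase f x m := by
  have hlt := runBase_lt hx hm
  have hcast : ((m - 1 : ℕ) : Fin (n + 1)) = ⟨m - 1, by omega⟩ :=
    Fin.ext (Fin.val_cast_of_lt (by omega))
  refine ⟨⟨m - 1, by omega⟩, by simp only; omega, ?_, ?_⟩
  · by_contra h
    exact Nat.findGreatest_is_greatest (show runBase f x m < m - 1 by omega) (by omega)
      (by rwa [hcast])
  · exact le_antisymm (Nat.findGreatest_mono_right _ (by simp only; omega))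
      (Nat.le_findGreatest (by simp only; omega) (apex_runBase_ne hx m))

theorem induce_runFibre_connected (hx : x ≠ f (0, 0)) {r : ℕ}
    (hne : ((univ.filter fun v => f v = x ∧ f (0, v.2) = x).filter
      fun v => runBase f x v.2 = r).Nonempty) :
    ((𝔾 n).induce (((univ.filter fun v => f v = x ∧ f (0, v.2) = x).filter
      fun v => runBase f x v.2 = r : Finset _) : Set (Fin (n + 1) × Fin (n + 1)))).Connected := by
  refine induce_connected_of_exists_adj_lt hne (0, ((r + 1 : ℕ) : Fin (n + 1)))
    (fun v => 2 * v.2.val + if v.1 = 0 then 0 else 1) ?_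
  rintro ⟨i, m⟩ hv hvz
  simp only [coe_filter, mem_filter, mem_univ, true_and, Set.mem_ofPred_eq] at hv
  obtain ⟨⟨-, hm⟩, rfl⟩ := hv
  by_cases hi : i = 0
  · subst hi
    obtain ⟨m', hm'm, hm', hrun⟩ :=
      exists_pred_runBase hx hm fun h => hvz (by rw [← h, Fin.cast_val_eq_self])
    exact ⟨(0, m'), by simp [hm', hrun], StrongProd.adj_right 0 (Fan.adj_of_val_succ hm'm).symm,
      by simp only [if_true]; omega⟩
  · exact ⟨(0, m), by simp [hm], StrongProd.adj_left (Fan.adj_zero hi).symm m, by simp [hi]⟩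

end Runs

section FanSquare

variable {n c : ℕ} {f : Fin (n + 1) × Fin (n + 1) → Fin c} {b : ℝ} {x y : Fin c}

def apexRow (f : Fin (n + 1) × Fin (n + 1) → Fin c) (x : Fin c) : Finset (Fin (n + 1)) :=
  univ.filter fun j => f (0, j) = x

def apexCol (f : Fin (n + 1) × Fin (n + 1) → Fin c) (x : Fin c) : Finset (Fin (n + 1)) :=
  univ.filter fun i => f (i, 0) = x

theorem sum_card_apexRow : ∑ x, #(apexRow f x) = n + 1 := by
  simp only [apexRow]
  rw [← card_eq_sum_card_fiberwise (fun _ _ => mem_univ _), card_univ, Fintype.card_fin]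

theorem card_apexRow_add_card_apexCol_le_card (hx : x ≠ f (0, 0)) :
    #(apexRow f x) + #(apexCol f x) ≤
      #(univ.filter fun v : Fin (n + 1) × Fin (n + 1) => f v = x ∧ (v.1 = 0 ∨ v.2 = 0)) := by
  have hdisj : Disjoint ((apexRow f x).map (Function.Embedding.sectR 0 _))
      ((apexCol f x).map (Function.Embedding.sectL _ 0)) := by
    rw [Finset.disjoint_left]
    rintro _ hrow hcol
    simp only [apexRow, apexCol, mem_map, mem_filter, mem_univ, true_and,
      Function.Embedding.sectR_apply, Function.Embedding.sectL_apply] at hrow hcol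
    obtain ⟨j, hj, rfl⟩ := hrow
    obtain ⟨i, -, hij⟩ := hcol
    exact hx (by simp_all)
  have hsub : (apexRow f x).map (Function.Embedding.sectR 0 _) ∪
      (apexCol f x).map (Function.Embedding.sectL _ 0) ⊆
        univ.filter fun v => f v = x ∧ (v.1 = 0 ∨ v.2 = 0) := by
    intro v hv
    simp only [apexRow, apexCol, mem_union, mem_map, mem_filter, mem_univ, true_and,
      Function.Embedding.sectR_apply, Function.Embedding.sectL_apply] at hv
    rcases hv with ⟨j, hj, rfl⟩ | ⟨i, hi, rfl⟩
    · simp [hj]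
    · simp [hi]
  have hcard := card_le_card hsub
  rwa [card_union_of_disjoint hdisj, card_map, card_map] at hcard

theorem induce_apexCross_connected (hx : x ≠ f (0, 0)) (hrow : (apexRow f x).Nonempty)
    (hcol : (apexCol f x).Nonempty) :
    ((𝔾 n).induce ((univ.filter fun v : Fin (n + 1) × Fin (n + 1) =>
      f v = x ∧ (v.1 = 0 ∨ v.2 = 0) : Finset _) : Set (Fin (n + 1) × Fin (n + 1)))).Connected := by
  refine induce_connected_of_forall_adj_of_not (fun v => v.1 = 0) ?_ ?_ ?_
  · obtain ⟨j, hj⟩ := hrow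
    exact ⟨(0, j), by simpa [apexRow] using hj, rfl⟩
  · obtain ⟨i, hi⟩ := hcol
    simp only [apexCol, mem_filter, mem_univ, true_and] at hi
    exact ⟨(i, 0), by simpa using hi, fun h => hx (by simp_all)⟩
  · rintro ⟨_, j⟩ hu ⟨i, _⟩ hw rfl hi
    simp only [coe_filter, mem_univ, true_and, Set.mem_ofPred_eq] at hu hw
    obtain rfl : _ = 0 := hw.2.resolve_left hi
    exact StrongProd.adj_diag (Fan.adj_zero hi) (Fan.adj_zero fun hj => hx (by simp_all)).symm

namespace ClusterLEReal

theorem card_colourClass_le (hf : ClusterLEReal (𝔾 n) f b) :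
    (#(univ.filter fun v => f v = f (0, 0)) : ℝ) ≤ b :=
  hf _ (fun u hu v hv => by simp_all) (induce_connected_of_forall_adj_s7 (z := (0, 0))
    (by simp) fun v _ hv => (StrongProd.adj_of_dominant (fun _ => Fan.adj_zero)
      (fun _ => Fan.adj_zero) hv).symm)

theorem card_apexRow_le (hf : ClusterLEReal (𝔾 n) f b) : (#(apexRow f (f (0, 0))) : ℝ) ≤ b := by
  refine le_trans ?_ hf.card_colourClass_le
  exact_mod_cast card_le_card_of_injOn (fun j => (0, j)) (fun j hj => by simpa [apexRow] using hj)
    fun _ _ _ _ h => (Prod.ext_iff.1 h).2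

theorem card_apexCol_le (hf : ClusterLEReal (𝔾 n) f b) : (#(apexCol f (f (0, 0))) : ℝ) ≤ b :=
  (hf.comp_iso (StrongProd.comm (Fan n) (Fan n))).card_apexRow_le

theorem card_apexRow_add_card_apexCol_le (hf : ClusterLEReal (𝔾 n) f b) (hx : x ≠ f (0, 0))
    (hrow : (apexRow f x).Nonempty) (hcol : (apexCol f x).Nonempty) :
    (#(apexRow f x) + #(apexCol f x) : ℝ) ≤ b :=
  le_trans (by exact_mod_cast card_apexRow_add_card_apexCol_le_card hx)
    (hf _ (fun u hu v hv => by simp_all) (induce_apexCross_connected hx hrow hcol))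

theorem card_colour_in_apexRow_columns_le (hf : ClusterLEReal (𝔾 n) f b) (hx : x ≠ f (0, 0)) :
    (#(univ.filter fun v => f v = x ∧ f (0, v.2) = x) : ℝ) ≤ (n + 1 - #(apexRow f x)) * b := by
  set X := univ.filter fun v : Fin (n + 1) × Fin (n + 1) => f v = x ∧ f (0, v.2) = x
  have hb : 0 ≤ b := (Nat.cast_nonneg _).trans hf.card_colourClass_le
  have hruns : #(X.image fun v => runBase f x v.2) + #(apexRow f x) ≤ n + 1 := by
    have hsub : X.image (fun v => runBase f x v.2) ⊆ (apexRow f x)ᶜ.map Fin.valEmbedding := by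
      rintro _ hr
      obtain ⟨v, -, rfl⟩ := mem_image.1 hr
      refine mem_map.2 ⟨runBase f x v.2, by simpa [apexRow] using apex_runBase_ne hx v.2, ?_⟩
      exact Fin.val_cast_of_lt ((runBase_le v.2).trans_lt v.2.isLt)
    have hcompl := card_le_card hsub
    rw [card_map, card_compl, Fintype.card_fin] at hcompl
    have hrow := card_le_univ (apexRow f x)
    rw [Fintype.card_fin] at hrow
    omega
  calc (#X : ℝ) ≤ #(X.image fun v => runBase f x v.2) * b := by
        refine hf.card_le_card_image_mul (fun u hu v hv => by simp_all [X]) _ fun r hr => ?_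
        obtain ⟨v, hv, rfl⟩ := mem_image.1 hr
        exact induce_runFibre_connected hx ⟨v, mem_filter.2 ⟨hv, rfl⟩⟩
    _ ≤ (n + 1 - #(apexRow f x)) * b := by
        gcongr
        have : (#(X.image fun v => runBase f x v.2) + #(apexRow f x) : ℝ) ≤ n + 1 := by
          exact_mod_cast hruns
        linarith

theorem card_colour_in_apexCol_rows_le (hf : ClusterLEReal (𝔾 n) f b) (hy : y ≠ f (0, 0)) :
    (#(univ.filter fun v => f v = y ∧ f (v.1, 0) = y) : ℝ) ≤ (n + 1 - #(apexCol f y)) * b := by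
  refine le_of_eq_of_le ?_
    ((hf.comp_iso (StrongProd.comm (Fan n) (Fan n))).card_colour_in_apexRow_columns_le hy)
  exact congrArg Nat.cast <| card_equiv (Equiv.prodComm _ _) fun v => by
    simp only [mem_filter, mem_univ, true_and]; rfl

theorem card_apexCol_mul_card_apexRow_le (hf : ClusterLEReal (𝔾 n) f b) (hx : x ≠ f (0, 0))
    (hy : y ≠ f (0, 0)) (hcover : ∀ v, f v = f (0, 0) ∨ f v = x ∨ f v = y) :
    (#(apexCol f y) * #(apexRow f x) : ℝ) ≤
      b + (n + 1 - #(apexRow f x)) * b + (n + 1 - #(apexCol f y)) * b := by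
  have hsub : apexCol f y ×ˢ apexRow f x ⊆ (univ.filter fun v => f v = f (0, 0)) ∪
      (univ.filter fun v => f v = x ∧ f (0, v.2) = x) ∪
      (univ.filter fun v => f v = y ∧ f (v.1, 0) = y) := by
    rintro ⟨i, j⟩ hij
    simp only [apexCol, apexRow, mem_product, mem_filter, mem_univ, true_and] at hij
    rcases hcover (i, j) with h | h | h <;> simp [h, hij]
  have hcard := (card_le_card hsub).trans
    ((card_union_le _ _).trans (Nat.add_le_add_right (card_union_le _ _) _))
  rw [card_product] at hcard
  have hcard' : (#(apexCol f y) * #(apexRow f x) : ℝ) ≤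
      #(univ.filter fun v => f v = f (0, 0)) + #(univ.filter fun v => f v = x ∧ f (0, v.2) = x) +
      #(univ.filter fun v => f v = y ∧ f (v.1, 0) = y) := by
    exact_mod_cast hcard
  linarith [hf.card_colourClass_le, hf.card_colour_in_apexRow_columns_le hx,
    hf.card_colour_in_apexCol_rows_le hy]

end ClusterLEReal

end FanSquare

theorem le_and_le_or_le_and_le_of_add_le {N b k₁ k₂ i₁ i₂ : ℝ} (hb : 0 ≤ b) (hN : 2 * b < N)
    (hk₁ : 0 ≤ k₁) (hk₂ : 0 ≤ k₂) (hi₁ : 0 ≤ i₁) (hi₂ : 0 ≤ i₂)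
    (hk : N - b ≤ k₁ + k₂) (hi : N - b ≤ i₁ + i₂)
    (h₁ : 0 < k₁ → 0 < i₁ → k₁ + i₁ ≤ b) (h₂ : 0 < k₂ → 0 < i₂ → k₂ + i₂ ≤ b) :
    (N - b ≤ k₁ ∧ N - b ≤ i₂) ∨ (N - b ≤ k₂ ∧ N - b ≤ i₁) := by
  have hzero₁ : k₁ = 0 ∨ i₁ = 0 := by
    by_contra! h
    have := h₁ (hk₁.lt_of_ne' h.1) (hi₁.lt_of_ne' h.2)
    have := h₂ (by linarith) (by linarith)
    linarith
  have hzero₂ : k₂ = 0 ∨ i₂ = 0 := by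
    by_contra! h
    have := h₂ (hk₂.lt_of_ne' h.1) (hi₂.lt_of_ne' h.2)
    have := h₁ (by linarith) (by linarith)
    linarith
  rcases hzero₁ with h₁ | h₁ <;> rcases hzero₂ with h₂ | h₂
  · linarith
  · exact .inr ⟨by linarith, by linarith⟩
  · exact .inl ⟨by linarith, by linarith⟩
  · linarith

namespace ClusterLEReal

variable {n : ℕ} {f : Fin (n + 1) × Fin (n + 1) → Fin 3} {b : ℝ}

theorem sq_le_of_apex_eq_zero (hf : ClusterLEReal (𝔾 n) f b) (hf₀ : f (0, 0) = 0)
    (hb : 2 * b < n + 1) : (n + 1 - b) ^ 2 ≤ 2 * b ^ 2 + b := by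
  have hb₀ : 0 ≤ b := (Nat.cast_nonneg _).trans hf.card_colourClass_le
  have hrow : (#(apexRow f 0) + #(apexRow f 1) + #(apexRow f 2) : ℝ) = n + 1 := by
    exact_mod_cast (Fin.sum_univ_three _).symm.trans (sum_card_apexRow (f := f))
  have hcol : (#(apexCol f 0) + #(apexCol f 1) + #(apexCol f 2) : ℝ) = n + 1 := by
    exact_mod_cast (Fin.sum_univ_three _).symm.trans
      (sum_card_apexRow (f := f ∘ StrongProd.comm (Fan n) (Fan n)))
  have hrow₀ := hf.card_apexRow_le
  have hcol₀ := hf.card_apexCol_le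
  rw [hf₀] at hrow₀ hcol₀
  have hcross : ∀ c : Fin 3, c ≠ 0 → 0 < (#(apexRow f c) : ℝ) → 0 < (#(apexCol f c) : ℝ) →
      (#(apexRow f c) + #(apexCol f c) : ℝ) ≤ b := fun c hc hrow hcol =>
    hf.card_apexRow_add_card_apexCol_le (hf₀ ▸ hc) (card_pos.1 (by exact_mod_cast hrow))
      (card_pos.1 (by exact_mod_cast hcol))
  have hcover : ∀ v, f v = f (0, 0) ∨ f v = 1 ∨ f v = 2 := fun v => by
    rw [hf₀]
    generalize f v = c
    fin_cases c <;> simp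
  rcases le_and_le_or_le_and_le_of_add_le hb₀ hb (Nat.cast_nonneg _) (Nat.cast_nonneg _)
    (Nat.cast_nonneg _) (Nat.cast_nonneg _) (by linarith) (by linarith)
    (hcross 1 (by decide)) (hcross 2 (by decide)) with ⟨hk, hi⟩ | ⟨hk, hi⟩
  · have := hf.card_apexCol_mul_card_apexRow_le (x := 1) (y := 2) (hf₀ ▸ by decide)
      (hf₀ ▸ by decide) hcover
    nlinarith [mul_nonneg (sub_nonneg.2 hk) (sub_nonneg.2 hi)]
  · have := hf.card_apexCol_mul_card_apexRow_le (x := 2) (y := 1) (hf₀ ▸ by decide)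
      (hf₀ ▸ by decide) fun v => (hcover v).imp_right Or.symm
    nlinarith [mul_nonneg (sub_nonneg.2 hk) (sub_nonneg.2 hi)]

theorem sq_le (hf : ClusterLEReal (𝔾 n) f b) (hb : 2 * b < n + 1) :
    (n + 1 - b) ^ 2 ≤ 2 * b ^ 2 + b :=
  (hf.comp_injective (Equiv.swap (f (0, 0)) 0).injective).sq_le_of_apex_eq_zero
    (Equiv.swap_apply_left _ _) hb

end ClusterLEReal

/-- Every 3-colouring of `F_n ⊠ F_n` has a monochromatic component with at least
`(1 − 1/√2)·n` vertices. -/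
theorem three_colour_fan_fan (n : ℕ) (f : Fin (n + 1) × Fin (n + 1) → Fin 3) :
    ∃ S : Finset (Fin (n + 1) × Fin (n + 1)), IsMonochromatic f S ∧
      ((StrongProd (Fan n) (Fan n)).induce (S : Set (Fin (n + 1) × Fin (n + 1)))).Connected ∧
      (1 - 1 / Real.sqrt 2) * (n : ℝ) ≤ (S.card : ℝ) := by
  by_contra! hsmall
  have hf : ClusterLEReal (StrongProd (Fan n) (Fan n)) f ((1 - 1 / Real.sqrt 2) * n) :=
    fun S hS hconn => (hsmall S hS hconn).le
  set t := 1 / Real.sqrt 2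
  have ht : t ^ 2 = 1 / 2 := by simp [t]
  have ht₀ : 0 < t := by positivity
  have ht' : 5 / 8 < t := by nlinarith
  have hn : (0 : ℝ) ≤ n := n.cast_nonneg
  have := hf.sq_le (by nlinarith)
  nlinarith [congrArg (· * (n : ℝ) ^ 2) ht, mul_nonneg (sub_nonneg.2 ht'.le) (sq_nonneg (n : ℝ))]
end

section
/- Let c ≥ 2 and k ≥ 2 be integers. If H is a graph such that every c-colouring of H has a monochromatic component with at least k vertices, then every (c+1)-colouring of the cone over k−1 disjoint copies of H (the graph obtained from k−1 disjoint copies of H by adding one dominant vertex) has a monochromatic component with at least k vertices. -/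
open SimpleGraph

universe u v

/-- If every `c`-colouring of `H` has a monochromatic component with at least `k`
vertices, then every `(c+1)`-colouring of the cone over `k−1` disjoint copies of `H`
has a monochromatic component with at least `k` vertices. -/
theorem cone_lemma (c k : ℕ) (hc : 2 ≤ c) (hk : 2 ≤ k) {V : Type} (H : SimpleGraph V)
    (hH : ∀ f : V → Fin c, ∃ S : Finset V, IsMonochromatic f S ∧
      (H.induce (S : Set V)).Connected ∧ k ≤ S.card) :
    ∀ g : Option (Fin (k - 1) × V) → Fin (c + 1),
      ∃ S : Finset (Option (Fin (k - 1) × V)), IsMonochromatic g S ∧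
        ((GraphCone (k - 1) H).induce (S : Set (Option (Fin (k - 1) × V)))).Connected ∧
        k ≤ S.card := by
  classical
  intro g
  set a := g none with ha
  by_cases hcase : ∀ i : Fin (k - 1), ∃ v : V, g (some (i, v)) = a
  · -- star case: none together with one a-coloured vertex per copy
    choose v hv using hcase
    refine ⟨insert none (Finset.univ.image (fun i : Fin (k - 1) => some (i, v i))), ?_, ?_, ?_⟩
    · intro u hu w hw
      simp only [Finset.mem_insert, Finset.mem_image, Finset.mem_univ, true_and] at hu hw
      have hval : ∀ x, (x = none ∨ ∃ i, some (i, v i) = x) → g x = a := by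
        rintro x (rfl | ⟨i, rfl⟩)
        · exact ha.symm
        · exact hv i
      rw [hval u hu, hval w hw]
    · set S : Finset (Option (Fin (k - 1) × V)) :=
        insert none (Finset.univ.image (fun i : Fin (k - 1) => some (i, v i))) with hS
      have hnone : (none : Option (Fin (k - 1) × V)) ∈ (S : Set _) := by
        simp [hS]
      have hreach : ∀ x : (S : Set (Option (Fin (k - 1) × V))),
          ((GraphCone (k - 1) H).induce (S : Set _)).Reachable x ⟨none, hnone⟩ := by
        rintro ⟨x, hx⟩
        match x with
        | none => exact Reachable.refl _
        | some p =>
          refine Adj.reachable ?_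
          show (GraphCone (k - 1) H).Adj (some p) none
          trivial
      have : Nonempty (S : Set (Option (Fin (k - 1) × V))) := ⟨⟨none, hnone⟩⟩
      exact ⟨fun x y => (hreach x).trans (hreach y).symm⟩
    · rw [Finset.card_insert_of_notMem (by simp)]
      have : (Finset.univ.image (fun i : Fin (k - 1) => (some (i, v i) : Option (Fin (k - 1) × V)))).card = k - 1 := by
        rw [Finset.card_image_of_injective _ (fun i j hij => by
          have := Option.some_injective _ hij
          exact (Prod.mk.injEq .. ▸ this : _ ∧ _).1)]
        simp
      omega
  · -- some copy avoids colour a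
    push_neg at hcase
    obtain ⟨i, hi⟩ := hcase
    have hc0 : 0 < c := by omega
    set e := finSuccEquiv' a with he
    set f : V → Fin c := fun w => (e (g (some (i, w)))).getD ⟨0, hc0⟩ with hf
    obtain ⟨S, hmono, hconn, hcard⟩ := hH f
    have hgmono : ∀ u ∈ S, ∀ w ∈ S, g (some (i, u)) = g (some (i, w)) := by
      intro u hu w hw
      have h1 : e (g (some (i, u))) ≠ none := by
        intro h
        exact hi u (e.injective (by rw [h]; exact (finSuccEquiv'_at a).symm))
      have h2 : e (g (some (i, w))) ≠ none := by
        intro h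
        exact hi w (e.injective (by rw [h]; exact (finSuccEquiv'_at a).symm))
      obtain ⟨x, hx⟩ := Option.ne_none_iff_exists'.mp h1
      obtain ⟨y, hy⟩ := Option.ne_none_iff_exists'.mp h2
      have := hmono u hu w hw
      rw [hf] at this
      simp only [hx, hy, Option.getD_some] at this
      apply e.injective
      rw [hx, hy, this]
    refine ⟨S.image (fun w => (some (i, w) : Option (Fin (k - 1) × V))), ?_, ?_, ?_⟩
    · intro u hu w hw
      simp only [Finset.mem_image] at hu hw
      obtain ⟨u', hu', rfl⟩ := hu
      obtain ⟨w', hw', rfl⟩ := hw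
      exact hgmono u' hu' w' hw'
    · set S' : Finset (Option (Fin (k - 1) × V)) :=
        S.image (fun w => (some (i, w) : Option (Fin (k - 1) × V))) with hS'
      have hmem : ∀ w ∈ S, (some (i, w) : Option (Fin (k - 1) × V)) ∈ (S' : Set _) := by
        intro w hw
        simp only [hS', Finset.coe_image, Set.mem_image, Finset.mem_coe]
        exact ⟨w, hw, rfl⟩
      let φ : (H.induce (S : Set V)) →g ((GraphCone (k - 1) H).induce (S' : Set _)) :=
        { toFun := fun x => ⟨some (i, x.val), hmem x.val x.2⟩
          map_rel' := by
            rintro ⟨u, hu⟩ ⟨w, hw⟩ h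
            exact ⟨rfl, h⟩ }
      have hsurj : ∀ y : (S' : Set (Option (Fin (k - 1) × V))), ∃ x, φ x = y := by
        rintro ⟨y, hy⟩
        simp only [hS', Finset.coe_image, Set.mem_image, Finset.mem_coe] at hy
        obtain ⟨w, hw, rfl⟩ := hy
        exact ⟨⟨w, hw⟩, rfl⟩
      have hne : Nonempty (S : Set V) := by
        have : S.Nonempty := Finset.card_pos.mp (by omega)
        exact ⟨⟨this.choose, this.choose_spec⟩⟩
      have : Nonempty (S' : Set (Option (Fin (k - 1) × V))) := ⟨φ hne.some⟩
      refine ⟨fun x y => ?_⟩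
      obtain ⟨x', rfl⟩ := hsurj x
      obtain ⟨y', rfl⟩ := hsurj y
      exact (hconn x' y').map φ
    · rw [Finset.card_image_of_injective _ (fun u w huw => by
        simpa using huw)]
      exact hcard
end

section
/- Fix integers n ≥ 2 and k with 2 ≤ k ≤ n^3. Define G_2 to be the cone over n^2 disjoint copies of the fan F_{n^4}, and for c ≥ 2 define G_{c+1} to be the cone over (k−1) disjoint copies of G_c. Then for every c ≥ 2, every c-colouring of G_c has a monochromatic component with at least k vertices. -/
open SimpleGraph

universe u v

/-- Vertex type of the recursively defined family: index `c` corresponds to `G_{c+2}`,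
where `G_2` is the cone over `n²` copies of the fan `F_{n⁴}`, and `G_{c+1}` is the cone
over `k−1` copies of `G_c`. -/
def GVert (n k : ℕ) : ℕ → Type
  | 0 => Option (Fin (n ^ 2) × Fin (n ^ 4 + 1))
  | c + 1 => Option (Fin (k - 1) × GVert n k c)

/-- The recursively defined family of graphs: `Gfam n k c` is `G_{c+2}`. -/
def Gfam (n k : ℕ) : (c : ℕ) → SimpleGraph (GVert n k c)
  | 0 => GraphCone (n ^ 2) (Fan (n ^ 4))
  | c + 1 => GraphCone (k - 1) (Gfam n k c)

/-!
Let `a` be the colour of the apex of a cone. If `k - 1` other vertices have colour `a`, they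
span, together with the apex, a monochromatic star on `k` vertices. Otherwise some copy has few
vertices of colour `a`. In `G_{c+1}`, with its `k - 1` copies, some copy of `G_c` misses `a`
entirely, so it is coloured with the remaining `c` colours and induction applies. In `G_2`, as
`k - 1 < n² · n`, some fan has fewer than `n` vertices of colour `a`; then one of the `n` blocks
of `n³` consecutive path vertices misses `a`, and with only two colours it is a monochromatic
path on `n³ ≥ k` vertices.
-/

open Finset

section MonoConnectedSet

variable {V : Type u} {W : Type v}

def HasMonoConnectedSet {c : ℕ} (G : SimpleGraph V) (f : V → Fin c) (k : ℕ) : Prop :=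
  ∃ S : Finset V, IsMonochromatic f S ∧ (G.induce (S : Set V)).Connected ∧ k ≤ #S

lemma HasMonoConnectedSet.mono {c k l : ℕ} {G : SimpleGraph V} {f : V → Fin c} (hkl : k ≤ l)
    (h : HasMonoConnectedSet G f l) : HasMonoConnectedSet G f k :=
  let ⟨S, hmono, hconn, hcard⟩ := h
  ⟨S, hmono, hconn, hkl.trans hcard⟩

lemma SimpleGraph.Connected.induce_map {G : SimpleGraph V} {H : SimpleGraph W} (φ : G →g H)
    (hφ : Function.Injective φ) {S : Finset V} (hS : (G.induce (S : Set V)).Connected) :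
    (H.induce ((S.map ⟨φ, hφ⟩ : Finset W) : Set W)).Connected := by
  let ψ : G.induce (S : Set V) →g H.induce ((S.map ⟨φ, hφ⟩ : Finset W) : Set W) :=
    { toFun := fun x => ⟨φ x, mem_map_of_mem _ x.2⟩
      map_rel' := fun h => φ.map_rel h }
  refine hS.map ψ ?_
  rintro ⟨w, hw⟩
  obtain ⟨v, hv, rfl⟩ := mem_map.mp hw
  exact ⟨⟨v, hv⟩, rfl⟩

lemma HasMonoConnectedSet.map {c d k : ℕ} {G : SimpleGraph V} {H : SimpleGraph W} (φ : G →g H)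
    (hφ : Function.Injective φ) {g : V → Fin c} {f : W → Fin d} (σ : Fin c → Fin d)
    (hf : ∀ v, f (φ v) = σ (g v)) (h : HasMonoConnectedSet G g k) :
    HasMonoConnectedSet H f k := by
  obtain ⟨S, hmono, hconn, hcard⟩ := h
  refine ⟨S.map ⟨φ, hφ⟩, ?_, hconn.induce_map φ hφ, by simpa using hcard⟩
  simp only [IsMonochromatic, mem_map, Function.Embedding.coeFn_mk, forall_exists_index, and_imp]
  rintro _ u hu rfl _ v hv rfl
  rw [hf, hf, hmono u hu v hv]

lemma hasMonoConnectedSet_pathGraph {L : ℕ} (hL : 0 < L) (g : Fin L → Fin 1) :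
    HasMonoConnectedSet (pathGraph L) g L := by
  obtain ⟨ℓ, rfl⟩ := Nat.exists_eq_add_one_of_ne_zero hL.ne'
  refine ⟨univ, fun _ _ _ _ => Subsingleton.elim _ _, ?_, by simp⟩
  rw [coe_univ, (induceUnivIso _).connected_iff]
  exact pathGraph_connected ℓ

end MonoConnectedSet

lemma Nat.exists_Ico_disjoint {B : Finset ℕ} {q : ℕ} (hB : #B < q) (s L : ℕ) :
    ∃ j < q, ∀ b ∈ B, b ∉ Ico (s + j * L) (s + j * L + L) := by
  obtain ⟨j, hj, hjB⟩ := exists_mem_notMem_of_card_lt_card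
    (s := B.image fun b => (b - s) / L) (t := range q) (Finset.card_image_le.trans_lt (by simpa))
  refine ⟨j, mem_range.mp hj, fun b hb hbj => hjB (mem_image.mpr ⟨b, hb, ?_⟩)⟩
  rw [mem_Ico] at hbj
  exact Nat.div_eq_of_lt_le (by omega) (by rw [Nat.succ_mul]; omega)

def Fan.segment (N t L : ℕ) (h : t + L ≤ N) : pathGraph L →g Fan N where
  toFun d := ⟨t + 1 + d, by omega⟩
  map_rel' := by
    intro u v huv
    rw [pathGraph_adj] at huv
    simp only [Fan, fromRel_adj, ne_eq, Fin.ext_iff, Fin.val_zero]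
    omega

lemma Fan.segment_injective (N t L : ℕ) (h : t + L ≤ N) :
    Function.Injective (Fan.segment N t L h) := fun u v huv => by
  simpa [Fan.segment, Fin.ext_iff] using huv

namespace GraphCone

variable {V : Type u} {m C k : ℕ} {G : SimpleGraph V}

def copy (G : SimpleGraph V) (i : Fin m) : G →g GraphCone m G where
  toFun v := some (i, v)
  map_rel' h := ⟨rfl, h⟩

@[simp]
lemma copy_apply (i : Fin m) (v : V) : copy G i v = some (i, v) := rfl

lemma copy_injective (i : Fin m) : Function.Injective (copy G i) := fun _ _ h =>
  (Prod.ext_iff.mp (Option.some_injective _ h)).2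

lemma hasMonoConnectedSet_of_apex_class (f : Option (Fin m × V) → Fin C)
    (A : Finset (Fin m × V)) (hA : ∀ x ∈ A, f (some x) = f none) :
    HasMonoConnectedSet (GraphCone m G) f (#A + 1) := by
  have hnone : none ∉ A.map Function.Embedding.some := by simp
  have hcol : ∀ x ∈ cons none _ hnone, f x = f none := by
    simp only [mem_cons, mem_map, Function.Embedding.some_apply]
    rintro _ (rfl | ⟨x, hx, rfl⟩)
    exacts [rfl, hA x hx]
  refine ⟨cons none _ hnone, fun x hx y hy => (hcol x hx).trans (hcol y hy).symm, ?_, by simp⟩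
  rw [connected_iff_exists_forall_reachable]
  refine ⟨⟨none, mem_cons_self _ _⟩, ?_⟩
  rintro ⟨_ | x, hx⟩
  · rfl
  · exact Adj.reachable (G := GraphCone m G |>.induce _) trivial

lemma hasMonoConnectedSet_or_exists_copy [Fintype V] (f : Option (Fin m × V) → Fin C) {r : ℕ}
    (hk : k ≤ m * r + 1) :
    HasMonoConnectedSet (GraphCone m G) f k ∨ ∃ i, #{v | f (some (i, v)) = f none} < r := by
  refine or_iff_not_imp_right.mpr fun h => ?_
  push Not at h
  have hcard : m * r ≤ #{x : Fin m × V | f (some x) = f none} := calc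
    m * r = ∑ _i : Fin m, r := by simp
    _ ≤ ∑ i, #{v | f (some (i, v)) = f none} := sum_le_sum fun i _ => h i
    _ = _ := by simp only [card_filter, Fintype.sum_prod_type]
  exact (hasMonoConnectedSet_of_apex_class f {x | f (some x) = f none}
    fun x hx => (mem_filter.mp hx).2).mono (by omega)

lemma hasMonoConnectedSet_fan {N q L : ℕ} (hN : q * L ≤ N) (hL : 0 < L) (hkL : k ≤ L)
    (hkq : k ≤ m * q + 1) (f : Option (Fin m × Fin (N + 1)) → Fin 2) :
    HasMonoConnectedSet (GraphCone m (Fan N)) f k := by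
  obtain h | ⟨i, hi⟩ := hasMonoConnectedSet_or_exists_copy f hkq
  · exact h
  obtain ⟨j, hj, hfree⟩ := Nat.exists_Ico_disjoint (card_image_le.trans_lt hi) 1 L
  have hjL : j * L + L ≤ N := by nlinarith
  let φ := (copy (Fan N) i).comp (Fan.segment N (j * L) L hjL)
  have hφ : Function.Injective φ :=
    (copy_injective (G := Fan N) i).comp (Fan.segment_injective N _ L hjL)
  have havoid : ∀ d, f (φ d) ≠ f none := fun d hd =>
    hfree _ (mem_image_of_mem Fin.val (mem_filter.mpr ⟨mem_univ _, hd⟩))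
      (mem_Ico.mpr (by simp only [Fan.segment, RelHom.coeFn_mk]; omega))
  choose g hg using fun d => Fin.exists_succAbove_eq (havoid d)
  exact ((hasMonoConnectedSet_pathGraph hL g).map φ hφ _ fun d => (hg d).symm).mono hkL

lemma hasMonoConnectedSet_succ [Fintype V] (ih : ∀ g : V → Fin C, HasMonoConnectedSet G g k)
    (f : Option (Fin (k - 1) × V) → Fin (C + 1)) :
    HasMonoConnectedSet (GraphCone (k - 1) G) f k := by
  obtain h | ⟨i, hi⟩ := hasMonoConnectedSet_or_exists_copy (k := k) f (r := 1) (by omega)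
  · exact h
  have havoid : ∀ v, f (copy G i v) ≠ f none := by simpa using hi
  choose g hg using fun v => Fin.exists_succAbove_eq (havoid v)
  exact (ih g).map (copy G i) (copy_injective i) _ fun v => (hg v).symm

end GraphCone

instance GVert.instFintype (n k : ℕ) : ∀ c, Fintype (GVert n k c)
  | 0 => inferInstanceAs (Fintype (Option (Fin (n ^ 2) × Fin (n ^ 4 + 1))))
  | c + 1 =>
    letI := GVert.instFintype n k c
    inferInstanceAs (Fintype (Option (Fin (k - 1) × GVert n k c)))

theorem Gfam_lower_general (n k : ℕ) (hn : 2 ≤ n) (hkn : k ≤ n ^ 3) :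
    ∀ c : ℕ, ∀ f : GVert n k c → Fin (c + 2),
      ∃ S : Finset (GVert n k c), IsMonochromatic f S ∧
        ((Gfam n k c).induce (S : Set (GVert n k c))).Connected ∧ k ≤ S.card := by
  intro c
  induction c with
  | zero =>
    exact GraphCone.hasMonoConnectedSet_fan (q := n) (L := n ^ 3) (pow_succ' n 3).symm.le
      (by positivity) hkn (by ring_nf; omega)
  | succ c ih => exact GraphCone.hasMonoConnectedSet_succ ih

/-- For `n ≥ 2` and `2 ≤ k ≤ n³`, every `(c+2)`-colouring of `G_{c+2}` has a
monochromatic component with at least `k` vertices. -/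
theorem Gfam_lower (n k : ℕ) (hn : 2 ≤ n) (hk : 2 ≤ k) (hkn : k ≤ n ^ 3) :
    ∀ c : ℕ, ∀ f : GVert n k c → Fin (c + 2),
      ∃ S : Finset (GVert n k c), IsMonochromatic f S ∧
        ((Gfam n k c).induce (S : Set (GVert n k c))).Connected ∧ k ≤ S.card :=
  Gfam_lower_general n k hn hkn
end

section
/- There exists an absolute constant δ > 0 (one may take δ = 48^{−2/3}) such that for all n ≥ 1, every 4-colouring of F_n ⊠ F_n has a monochromatic component with at least δ·n^{2/3} vertices. -/
open SimpleGraph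

universe u v

/-!
Write the vertices of `F_n ⊠ F_n` as pairs `(i, j)` with `0 ≤ i, j ≤ n`, where `0` is the dominant
vertex of `F_n`: the vertices with a zero coordinate are hubs, the others form an `n × n` grid of
cells. Let `k` be the largest size of a monochromatic component. A hub and its neighbours of its
colour lie in one monochromatic component, so in each row (or column) at most `k` cells clash with
a given nearby hub, and at most `k` hubs clash with a given hub; hence all but `O(nk)` cells are
tame. Two tame cells adjacent in the grid see three distinct hub colours in common and avoid all
three, so they share the fourth colour. Thus every grid component of tame cells lies in a
monochromatic component and has at most `k` cells. Such a component meeting `r` rows and `c`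
columns has at most `min(k, rc) ≤ √k (r + c) / 2` cells, while the cell following its last cell in
a row or column is untame; summing, `n² ≤ (1 + √k) · O(nk)`, that is `k ≥ δ n^{2/3}`.
-/

open Finset

theorem fin_four_eq_of_avoid_three {a b c x y : Fin 4} (hab : a ≠ b) (hac : a ≠ c) (hbc : b ≠ c)
    (hx : a ≠ x ∧ b ≠ x ∧ c ≠ x) (hy : a ≠ y ∧ b ≠ y ∧ c ≠ y) : x = y := by
  omega

section Monochromatic

variable {V α β γ : Type*}

/-- The monochromatic components of `f` are the connected components of this graph. -/
def monochromaticGraph (G : SimpleGraph V) (f : V → α) : SimpleGraph V where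
  Adj u v := G.Adj u v ∧ f u = f v
  symm := ⟨fun _ _ h => ⟨h.1.symm, h.2.symm⟩⟩
  loopless := ⟨fun _ h => h.1.ne rfl⟩

variable {G : SimpleGraph V}

theorem monochromaticGraph_le (f : V → α) : monochromaticGraph G f ≤ G := fun _ _ h => h.1

theorem apply_eq_of_reachable_monochromaticGraph {f : V → α} {u v : V}
    (h : (monochromaticGraph G f).Reachable u v) : f u = f v := by
  obtain ⟨p⟩ := h
  induction p with
  | nil => rfl
  | cons hadj _ ih => exact hadj.2.trans ih

theorem connectedComponentMk_monochromaticGraph_eq {f : V → α} {u v : V} (h : G.Adj u v)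
    (hf : f u = f v) :
    (monochromaticGraph G f).connectedComponentMk u =
      (monochromaticGraph G f).connectedComponentMk v :=
  ConnectedComponent.sound (show (monochromaticGraph G f).Adj u v from ⟨h, hf⟩).reachable

variable [Finite V] {c k : ℕ} {f : V → Fin c}

theorem ClusterLE.card_le_of_mapsTo_supp (hk : ClusterLE G f k)
    (C : (monochromaticGraph G f).ConnectedComponent) {s : Finset β} {φ : β → V}
    (hφ : Set.InjOn φ s) (hs : ∀ b ∈ s, φ b ∈ C.supp) : s.card ≤ k := by
  set S := (Set.toFinite C.supp).toFinset
  have hS : (S : Set V) = C.supp := Set.Finite.coe_toFinset _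
  refine (card_le_card_of_injOn φ (fun b hb => ?_) hφ).trans (hk S (fun u hu v hv => ?_) ?_)
  · simpa [S] using hs b hb
  · rw [← mem_coe, hS, C.mem_supp_iff] at hu hv
    exact apply_eq_of_reachable_monochromaticGraph (ConnectedComponent.exact (hu.trans hv.symm))
  · rw [hS]
    exact C.maximal_connected_induce_supp.prop.mono
      (SimpleGraph.comap_monotone _ (monochromaticGraph_le f))

theorem ClusterLE.card_filter_le_mul [DecidableEq γ] (hk : ClusterLE G f k) {s : Finset β}
    {t : Finset γ} (π : β → γ) (hπ : ∀ b ∈ s, π b ∈ t) (u : γ → V) (w : β → V)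
    (hinj : ∀ a ∈ s, ∀ b ∈ s, π a = π b → w a = w b → a = b)
    (hadj : ∀ b ∈ s, G.Adj (u (π b)) (w b)) :
    (s.filter fun b => f (u (π b)) = f (w b)).card ≤ k * t.card := by
  refine card_le_mul_card_image_of_maps_to (fun b hb => hπ b (mem_filter.1 hb).1) k
    fun x _ => hk.card_le_of_mapsTo_supp ((monochromaticGraph G f).connectedComponentMk (u x))
      (φ := w) (fun a ha b hb hab => ?_) fun b hb => ?_
  · simp only [coe_filter, Set.mem_ofPred_eq, mem_filter] at ha hb
    exact hinj a ha.1.1 b hb.1.1 (ha.2.trans hb.2.symm) hab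
  · simp only [mem_filter] at hb
    obtain ⟨⟨hbs, hcol⟩, rfl⟩ := hb
    exact (connectedComponentMk_monochromaticGraph_eq (hadj b hbs) hcol).symm

theorem exists_clusterLE_card [Nonempty V] (G : SimpleGraph V) (f : V → Fin c) :
    ∃ S : Finset V, IsMonochromatic f S ∧ (G.induce (S : Set V)).Connected ∧
      ClusterLE G f S.card := by
  classical
  have := Fintype.ofFinite V
  obtain ⟨v⟩ := ‹Nonempty V›
  obtain ⟨S, hS, hmax⟩ := exists_max_image
    (univ.filter fun S : Finset V => IsMonochromatic f S ∧ (G.induce (S : Set V)).Connected)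
    card ⟨{v}, mem_filter.2 ⟨mem_univ _,
      fun _ hu _ hw => by rw [mem_singleton.1 hu, mem_singleton.1 hw],
      by rw [coe_singleton]; exact Connected.of_subsingleton⟩⟩
  simp only [mem_filter, mem_univ, true_and] at hS hmax
  exact ⟨S, hS.1, hS.2, fun S' h₁ h₂ => hmax S' ⟨h₁, h₂⟩⟩

end Monochromatic

section GridSeparator

variable {α β : Type*} [DecidableEq α] [DecidableEq β]

theorem card_image_le_card_filter_notMem {A T : Finset α} (π : α → β) (σ : α → α) (μ : α → ℕ)
    (hπ : ∀ a, π (σ a) = π a) (hμ : ∀ a, μ a < μ (σ a)) (hA : ∀ a ∈ A, σ a ∈ T → σ a ∈ A) :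
    (A.image π).card ≤ (A.filter fun a => σ a ∉ T).card := by
  refine (card_le_card (t := (A.filter fun a => σ a ∉ T).image π) fun b hb => ?_).trans
    card_image_le
  obtain ⟨a₀, ha₀, rfl⟩ := mem_image.1 hb
  obtain ⟨a, ha, hmax⟩ := exists_max_image (A.filter fun a => π a = π a₀) μ
    ⟨a₀, mem_filter.2 ⟨ha₀, rfl⟩⟩
  rw [mem_filter] at ha
  refine mem_image.2 ⟨a, mem_filter.2 ⟨ha.1, fun hσ => ?_⟩, ha.2⟩
  exact (hμ a).not_ge (hmax (σ a) (mem_filter.2 ⟨hA a ha.1 hσ, (hπ a).trans ha.2⟩))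

theorem card_filter_notMem_le_of_injective {S T U : Finset α} {σ : α → α}
    (hσ : σ.Injective) (hU : U ⊆ S ∪ T) (hσU : ∀ a ∈ T, σ a ∈ U) :
    (T.filter fun a => σ a ∉ T).card ≤ S.card :=
  card_le_card_of_injOn σ (fun a ha => (mem_union.1 (hU (hσU a (mem_filter.1 ha).1))).resolve_right
    (mem_filter.1 ha).2) hσ.injOn

theorem card_le_sqrt_mul_card_image_add {A : Finset (α × β)} {k : ℕ} (hk : A.card ≤ k) :
    (A.card : ℝ) ≤ √k * ((A.image Prod.fst).card + (A.image Prod.snd).card) / 2 := by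
  set r := (A.image Prod.fst).card
  set c := (A.image Prod.snd).card
  have hrc : A.card ≤ r * c := (card_le_card fun p hp =>
    mem_product.2 ⟨mem_image_of_mem _ hp, mem_image_of_mem _ hp⟩).trans (card_product _ _).le
  have hk' : (A.card : ℝ) ≤ k := by exact_mod_cast hk
  have hrc' : (A.card : ℝ) ≤ r * c := by exact_mod_cast hrc
  rw [← pow_le_pow_iff_left₀ (by positivity) (by positivity) two_ne_zero, div_pow, mul_pow,
    Real.sq_sqrt (by positivity)]
  nlinarith [mul_nonneg (Nat.cast_nonneg k : (0 : ℝ) ≤ k) (sq_nonneg ((r : ℝ) - c)),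
    mul_le_mul hk' hrc' (by positivity) (by positivity)]

theorem card_le_sqrt_mul_card_filter_add {A T : Finset (ℕ × ℕ)} {k : ℕ} (hk : A.card ≤ k)
    (hA₁ : ∀ p ∈ A, (p.1 + 1, p.2) ∈ T → (p.1 + 1, p.2) ∈ A)
    (hA₂ : ∀ p ∈ A, (p.1, p.2 + 1) ∈ T → (p.1, p.2 + 1) ∈ A) :
    (A.card : ℝ) ≤ √k * ((A.filter fun p => (p.1, p.2 + 1) ∉ T).card +
      (A.filter fun p => (p.1 + 1, p.2) ∉ T).card) / 2 := by
  refine (card_le_sqrt_mul_card_image_add hk).trans ?_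
  have hrows := card_image_le_card_filter_notMem Prod.fst (fun p => (p.1, p.2 + 1)) Prod.snd
    (fun _ => rfl) (fun _ => Nat.lt_succ_self _) hA₂
  have hcols := card_image_le_card_filter_notMem Prod.snd (fun p => (p.1 + 1, p.2)) Prod.fst
    (fun _ => rfl) (fun _ => Nat.lt_succ_self _) hA₁
  gcongr

theorem sq_le_one_add_sqrt_mul_card {n k : ℕ} {S T : Finset (ℕ × ℕ)} (κ : ℕ × ℕ → β)
    (hcover : Icc 1 n ×ˢ Icc 1 n ⊆ S ∪ T) (hT : T ⊆ Ico 1 n ×ˢ Ico 1 n)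
    (hκ₁ : ∀ p ∈ T, (p.1 + 1, p.2) ∈ T → κ (p.1 + 1, p.2) = κ p)
    (hκ₂ : ∀ p ∈ T, (p.1, p.2 + 1) ∈ T → κ (p.1, p.2 + 1) = κ p)
    (hk : ∀ b, (T.filter (κ · = b)).card ≤ k) :
    (n : ℝ) ^ 2 ≤ (1 + √k) * S.card := by
  have hstep : ∀ p ∈ T, (p.1 + 1, p.2) ∈ Icc 1 n ×ˢ Icc 1 n ∧ (p.1, p.2 + 1) ∈ Icc 1 n ×ˢ Icc 1 n :=
    fun p hp => by
      have := hT hp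
      simp only [mem_product, mem_Icc, mem_Ico] at this ⊢
      omega
  have hright : (T.filter fun p => (p.1, p.2 + 1) ∉ T).card ≤ S.card :=
    card_filter_notMem_le_of_injective (fun p q h => by simp_all [Prod.ext_iff]) hcover
      fun p hp => (hstep p hp).2
  have hdown : (T.filter fun p => (p.1 + 1, p.2) ∉ T).card ≤ S.card :=
    card_filter_notMem_le_of_injective (fun p q h => by simp_all [Prod.ext_iff]) hcover
      fun p hp => (hstep p hp).1
  have hfib : ∀ (P : ℕ × ℕ → Prop) [DecidablePred P],
      ∑ b ∈ T.image κ, ((T.filter (κ · = b)).filter P).card = (T.filter P).card := fun P _ => by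
    simp_rw [filter_comm _ P]
    exact (card_eq_sum_card_fiberwise fun p hp => mem_image_of_mem κ (mem_filter.1 hp).1).symm
  have hblock : ∀ b, ((T.filter (κ · = b)).card : ℝ) ≤
      √k * (((T.filter (κ · = b)).filter fun p => (p.1, p.2 + 1) ∉ T).card +
        ((T.filter (κ · = b)).filter fun p => (p.1 + 1, p.2) ∉ T).card) / 2 := fun b =>
    card_le_sqrt_mul_card_filter_add (hk b)
      (fun p hp hσ => mem_filter.2 ⟨hσ, (hκ₁ p (mem_filter.1 hp).1 hσ).trans (mem_filter.1 hp).2⟩)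
      fun p hp hσ => mem_filter.2 ⟨hσ, (hκ₂ p (mem_filter.1 hp).1 hσ).trans (mem_filter.1 hp).2⟩
  have hTS : (T.card : ℝ) ≤ √k * S.card := calc
    (T.card : ℝ) = ∑ b ∈ T.image κ, ((T.filter (κ · = b)).card : ℝ) := by
      exact_mod_cast card_eq_sum_card_image κ T
    _ ≤ _ := sum_le_sum fun b _ => hblock b
    _ = √k * ((T.filter fun p => (p.1, p.2 + 1) ∉ T).card +
          (T.filter fun p => (p.1 + 1, p.2) ∉ T).card) / 2 := by
      rw [← sum_div, ← mul_sum, sum_add_distrib, ← hfib, ← hfib]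
      push_cast
      rfl
    _ ≤ √k * S.card := by
      have : ((T.filter fun p => (p.1, p.2 + 1) ∉ T).card : ℝ) +
          (T.filter fun p => (p.1 + 1, p.2) ∉ T).card ≤ 2 * S.card := by
        exact_mod_cast (by omega : _ ≤ 2 * S.card)
      nlinarith [Real.sqrt_nonneg k]
  calc (n : ℝ) ^ 2 = (Icc 1 n ×ˢ Icc 1 n).card := by simp [sq]
    _ ≤ (S ∪ T).card := by exact_mod_cast card_le_card hcover
    _ ≤ S.card + T.card := by exact_mod_cast card_union_le S T
    _ ≤ (1 + √k) * S.card := by linarith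

end GridSeparator

theorem StrongProd.adj_of_eq_or_adj {α β : Type*} {G : SimpleGraph α} {H : SimpleGraph β}
    {x y : α × β} (hne : x ≠ y) (h₁ : x.1 = y.1 ∨ G.Adj x.1 y.1) (h₂ : x.2 = y.2 ∨ H.Adj x.2 y.2) :
    (StrongProd G H).Adj x y := by
  rcases h₁ with h₁ | h₁ <;> rcases h₂ with h₂ | h₂
  · exact absurd (Prod.ext h₁ h₂) hne
  · exact Or.inl ⟨h₁, h₂⟩
  · exact Or.inr (Or.inl ⟨h₂, h₁⟩)
  · exact Or.inr (Or.inr ⟨h₁, h₂⟩)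

section FanGrid

open Fin.NatCast

variable {n : ℕ}

theorem Fin.val_natCast_of_le {a : ℕ} (ha : a ≤ n) : ((a : Fin (n + 1)) : ℕ) = a :=
  Fin.val_cast_of_lt (Nat.lt_succ_of_le ha)

theorem Fan.eq_or_adj_natCast {a b : ℕ} (ha : a ≤ n) (hb : b ≤ n)
    (h : a = 0 ∨ b = 0 ∨ (a ≤ b + 1 ∧ b ≤ a + 1)) : (a : Fin (n + 1)) = b ∨ (Fan n).Adj a b := by
  simp only [Fan, fromRel_adj, ne_eq, Fin.ext_iff, Fin.val_natCast_of_le ha,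
    Fin.val_natCast_of_le hb, Fin.val_zero]
  omega

/-- The coordinate `0` is the dominant vertex of `F_n`; coordinates are read modulo `n + 1`, so
only `p ∈ [0, n]²` is meaningful. -/
def fanPt (n : ℕ) (p : ℕ × ℕ) : Fin (n + 1) × Fin (n + 1) := (p.1, p.2)

theorem fanPt_injOn : Set.InjOn (fanPt n) {p | p.1 ≤ n ∧ p.2 ≤ n} := by
  intro p hp q hq h
  simp only [fanPt, Prod.mk.injEq, Fin.ext_iff, Fin.val_natCast_of_le hp.1,
    Fin.val_natCast_of_le hp.2, Fin.val_natCast_of_le hq.1, Fin.val_natCast_of_le hq.2] at h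
  exact Prod.ext h.1 h.2

def FanNear (n : ℕ) (p q : ℕ × ℕ) : Prop :=
  p.1 ≤ n ∧ p.2 ≤ n ∧ q.1 ≤ n ∧ q.2 ≤ n ∧ (p.1 ≠ q.1 ∨ p.2 ≠ q.2) ∧
    (p.1 = 0 ∨ q.1 = 0 ∨ (p.1 ≤ q.1 + 1 ∧ q.1 ≤ p.1 + 1)) ∧
    (p.2 = 0 ∨ q.2 = 0 ∨ (p.2 ≤ q.2 + 1 ∧ q.2 ≤ p.2 + 1))

theorem FanNear.adj {p q : ℕ × ℕ} (h : FanNear n p q) :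
    (StrongProd (Fan n) (Fan n)).Adj (fanPt n p) (fanPt n q) := by
  obtain ⟨hp₁, hp₂, hq₁, hq₂, hne, h₁, h₂⟩ := h
  refine StrongProd.adj_of_eq_or_adj (fun heq => ?_) (Fan.eq_or_adj_natCast hp₁ hq₁ h₁)
    (Fan.eq_or_adj_natCast hp₂ hq₂ h₂)
  have := fanPt_injOn (n := n) (show p ∈ {p : ℕ × ℕ | p.1 ≤ n ∧ p.2 ≤ n} from ⟨hp₁, hp₂⟩)
    (show q ∈ {p : ℕ × ℕ | p.1 ≤ n ∧ p.2 ≤ n} from ⟨hq₁, hq₂⟩) heq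
  subst this
  omega

/-- Two tame cells that are neighbours in the grid avoid three distinct hub colours, so they
share the fourth. -/
def IsTame (n : ℕ) (g : ℕ × ℕ → Fin 4) (p : ℕ × ℕ) : Prop :=
  p ∈ Ico 1 n ×ˢ Ico 1 n ∧
    g (0, 0) ≠ g p ∧ g (p.1, 0) ≠ g p ∧ g (p.1 + 1, 0) ≠ g p ∧ g (0, p.2) ≠ g p ∧
    g (0, p.2 + 1) ≠ g p ∧ g (0, 0) ≠ g (p.1, 0) ∧ g (0, 0) ≠ g (0, p.2 + 1) ∧
    g (p.1, 0) ≠ g (0, p.2 + 1) ∧ g (0, 0) ≠ g (p.1 + 1, 0) ∧ g (p.1 + 1, 0) ≠ g (0, p.2 + 1)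

instance (g : ℕ × ℕ → Fin 4) : DecidablePred (IsTame n g) := fun _ => by
  unfold IsTame; infer_instance

variable {g : ℕ × ℕ → Fin 4} {p : ℕ × ℕ}

theorem IsTame.apply_right_eq (hp : IsTame n g p) (hq : IsTame n g (p.1, p.2 + 1)) :
    g (p.1, p.2 + 1) = g p := by
  obtain ⟨-, h₀, hi, -, -, hj, h₀i, h₀j, hij, -, -⟩ := hp
  obtain ⟨-, k₀, ki, -, kj, -⟩ := hq
  exact fin_four_eq_of_avoid_three h₀i h₀j hij ⟨k₀, ki, kj⟩ ⟨h₀, hi, hj⟩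

theorem IsTame.apply_down_eq (hp : IsTame n g p) (hq : IsTame n g (p.1 + 1, p.2)) :
    g (p.1 + 1, p.2) = g p := by
  obtain ⟨-, h₀, -, hi, -, hj, -, h₀j, -, h₀i, hij⟩ := hp
  obtain ⟨-, k₀, ki, -, -, kj, -⟩ := hq
  exact fin_four_eq_of_avoid_three h₀i h₀j hij ⟨k₀, ki, kj⟩ ⟨h₀, hi, hj⟩

variable {k : ℕ} {f : Fin (n + 1) × Fin (n + 1) → Fin 4}

theorem ClusterLE.card_filter_clash_le (hk : ClusterLE (StrongProd (Fan n) (Fan n)) f k)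
    (π : ℕ × ℕ → ℕ) (u : ℕ → ℕ × ℕ) (w : ℕ × ℕ → ℕ × ℕ) (hπ : π = Prod.fst ∨ π = Prod.snd)
    (hinj : ∀ p ∈ Ico 1 n ×ˢ Ico 1 n, ∀ q ∈ Ico 1 n ×ˢ Ico 1 n, π p = π q → w p = w q → p = q)
    (hnear : ∀ p ∈ Ico 1 n ×ˢ Ico 1 n, FanNear n (u (π p)) (w p)) :
    ((Ico 1 n ×ˢ Ico 1 n).filter fun p => f (fanPt n (u (π p))) = f (fanPt n (w p))).card ≤
      k * n := by
  refine (hk.card_filter_le_mul (t := range n) π (fun p hp => mem_range.2 ?_)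
    (fun i => fanPt n (u i)) (fun p => fanPt n (w p)) (fun p hp q hq h₁ h₂ => hinj p hp q hq h₁
      (fanPt_injOn ⟨(hnear p hp).2.2.1, (hnear p hp).2.2.2.1⟩
        ⟨(hnear q hq).2.2.1, (hnear q hq).2.2.2.1⟩ h₂)) fun p hp => (hnear p hp).adj).trans
    (by rw [card_range])
  simp only [mem_product, mem_Ico] at hp
  rcases hπ with rfl | rfl <;> omega

theorem ClusterLE.card_filter_not_isTame_le (hk : ClusterLE (StrongProd (Fan n) (Fan n)) f k) :
    ((Ico 1 n ×ˢ Ico 1 n).filter fun p => ¬ IsTame n (f ∘ fanPt n) p).card ≤ 10 * (k * n) := by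
  have hI : ∀ p ∈ Ico 1 n ×ˢ Ico 1 n, 1 ≤ p.1 ∧ p.1 < n ∧ 1 ≤ p.2 ∧ p.2 < n := fun p hp => by
    simpa only [mem_product, mem_Ico, and_assoc] using hp
  simp only [IsTame, Function.comp_apply, not_and_or, ne_eq, not_not, filter_or]
  rw [filter_false_of_mem (fun p hp => not_not.2 hp), empty_union]
  grw [card_union_le, card_union_le, card_union_le, card_union_le, card_union_le, card_union_le,
    card_union_le, card_union_le, card_union_le]
  calc _ ≤ k * n + (k * n + (k * n + (k * n + (k * n + (k * n + (k * n + (k * n +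
        (k * n + k * n)))))))) := by
        gcongr
        · exact hk.card_filter_clash_le Prod.fst (fun _ => (0, 0)) id (Or.inl rfl)
            (fun _ _ _ _ _ h => h) fun p hp => by have := hI p hp; dsimp only [FanNear, id]; omega
        · exact hk.card_filter_clash_le Prod.fst (fun i => (i, 0)) id (Or.inl rfl)
            (fun _ _ _ _ _ h => h) fun p hp => by have := hI p hp; dsimp only [FanNear, id]; omega
        · exact hk.card_filter_clash_le Prod.fst (fun i => (i + 1, 0)) id (Or.inl rfl)
            (fun _ _ _ _ _ h => h) fun p hp => by have := hI p hp; dsimp only [FanNear, id]; omega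
        · exact hk.card_filter_clash_le Prod.snd (fun j => (0, j)) id (Or.inr rfl)
            (fun _ _ _ _ _ h => h) fun p hp => by have := hI p hp; dsimp only [FanNear, id]; omega
        · exact hk.card_filter_clash_le Prod.snd (fun j => (0, j + 1)) id (Or.inr rfl)
            (fun _ _ _ _ _ h => h) fun p hp => by have := hI p hp; dsimp only [FanNear, id]; omega
        · exact hk.card_filter_clash_le Prod.snd (fun _ => (0, 0)) (fun p => (p.1, 0)) (Or.inr rfl)
            (fun _ _ _ _ h₁ h₂ => Prod.ext (Prod.mk.inj h₂).1 h₁)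
            fun p hp => by have := hI p hp; dsimp only [FanNear]; omega
        · exact hk.card_filter_clash_le Prod.fst (fun _ => (0, 0)) (fun p => (0, p.2 + 1))
            (Or.inl rfl) (fun _ _ _ _ h₁ h₂ => Prod.ext h₁ (Nat.succ_injective (Prod.mk.inj h₂).2))
            fun p hp => by have := hI p hp; dsimp only [FanNear]; omega
        · exact hk.card_filter_clash_le Prod.fst (fun i => (i, 0)) (fun p => (0, p.2 + 1))
            (Or.inl rfl) (fun _ _ _ _ h₁ h₂ => Prod.ext h₁ (Nat.succ_injective (Prod.mk.inj h₂).2))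
            fun p hp => by have := hI p hp; dsimp only [FanNear]; omega
        · exact hk.card_filter_clash_le Prod.snd (fun _ => (0, 0)) (fun p => (p.1 + 1, 0))
            (Or.inr rfl) (fun _ _ _ _ h₁ h₂ => Prod.ext (Nat.succ_injective (Prod.mk.inj h₂).1) h₁)
            fun p hp => by have := hI p hp; dsimp only [FanNear]; omega
        · exact hk.card_filter_clash_le Prod.fst (fun i => (i + 1, 0)) (fun p => (0, p.2 + 1))
            (Or.inl rfl) (fun _ _ _ _ h₁ h₂ => Prod.ext h₁ (Nat.succ_injective (Prod.mk.inj h₂).2))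
            fun p hp => by have := hI p hp; dsimp only [FanNear]; omega
    _ = 10 * (k * n) := by ring

theorem card_filter_notMem_Ico_prod_le (n : ℕ) :
    ((Icc 1 n ×ˢ Icc 1 n).filter (· ∉ Ico 1 n ×ˢ Ico 1 n)).card ≤ 2 * n := by
  have hsub : (Icc 1 n ×ˢ Icc 1 n).filter (· ∉ Ico 1 n ×ˢ Ico 1 n) ⊆
      ({n} ×ˢ Icc 1 n) ∪ (Icc 1 n ×ˢ {n}) := fun p hp => by
    simp only [mem_filter, mem_product, mem_Icc, mem_Ico, mem_union, mem_singleton] at hp ⊢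
    omega
  refine (card_le_card hsub).trans ((card_union_le _ _).trans ?_)
  simp only [card_product, card_singleton, Nat.card_Icc]
  omega

theorem ClusterLE.card_filter_not_isTame_Icc_le
    (hk : ClusterLE (StrongProd (Fan n) (Fan n)) f k) :
    ((Icc 1 n ×ˢ Icc 1 n).filter (¬ IsTame n (f ∘ fanPt n) ·)).card ≤ 2 * n + 10 * (k * n) := by
  have hsub : (Icc 1 n ×ˢ Icc 1 n).filter (¬ IsTame n (f ∘ fanPt n) ·) ⊆
      (Icc 1 n ×ˢ Icc 1 n).filter (· ∉ Ico 1 n ×ˢ Ico 1 n) ∪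
        (Ico 1 n ×ˢ Ico 1 n).filter (¬ IsTame n (f ∘ fanPt n) ·) := fun p hp => by
    rw [mem_filter] at hp
    by_cases hpI : p ∈ Ico 1 n ×ˢ Ico 1 n
    · exact mem_union_right _ (mem_filter.2 ⟨hpI, hp.2⟩)
    · exact mem_union_left _ (mem_filter.2 ⟨hp.1, hpI⟩)
  exact (card_le_card hsub).trans ((card_union_le _ _).trans
    (add_le_add (card_filter_notMem_Ico_prod_le n) hk.card_filter_not_isTame_le))

theorem ClusterLE.fan_sq_le (hk : ClusterLE (StrongProd (Fan n) (Fan n)) f k) :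
    (n : ℝ) ^ 2 ≤ (1 + √k) * (2 * n + 10 * (k * n)) := by
  classical
  set grid := Icc 1 n ×ˢ Icc 1 n
  set T := grid.filter (IsTame n (f ∘ fanPt n))
  set S := grid.filter (¬ IsTame n (f ∘ fanPt n) ·)
  have hT : T ⊆ Ico 1 n ×ˢ Ico 1 n := fun p hp => (mem_filter.1 hp).2.1
  have hbound : ∀ p ∈ T, p.1 ≤ n ∧ p.2 ≤ n := fun p hp => by
    have := hT hp
    simp only [mem_product, mem_Ico] at this
    omega
  have hnear : ∀ p ∈ T, FanNear n (p.1 + 1, p.2) p ∧ FanNear n (p.1, p.2 + 1) p := fun p hp => by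
    have := hT hp
    simp only [mem_product, mem_Ico] at this
    dsimp only [FanNear]
    omega
  refine (sq_le_one_add_sqrt_mul_card (S := S) (T := T)
    (fun p => (monochromaticGraph _ f).connectedComponentMk (fanPt n p))
    (by rw [union_comm, filter_union_filter_not_eq]) hT
    (fun p hp hq => connectedComponentMk_monochromaticGraph_eq (hnear p hp).1.adj
      ((mem_filter.1 hp).2.apply_down_eq (mem_filter.1 hq).2))
    (fun p hp hq => connectedComponentMk_monochromaticGraph_eq (hnear p hp).2.adj
      ((mem_filter.1 hp).2.apply_right_eq (mem_filter.1 hq).2))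
    fun C => hk.card_le_of_mapsTo_supp C (φ := fanPt n)
      (fanPt_injOn.mono fun p hp => hbound p (mem_filter.1 hp).1)
      fun p hp => (C.mem_supp_iff _).2 (mem_filter.1 hp).2).trans ?_
  gcongr
  exact_mod_cast hk.card_filter_not_isTame_Icc_le

end FanGrid

theorem one_div_nine_mul_rpow_le {x y : ℝ} (hx : 0 ≤ x) (hy : 1 ≤ y)
    (h : x ^ 2 ≤ (1 + √y) * (2 * x + 10 * (y * x))) : 1 / 9 * x ^ ((2 : ℝ) / 3) ≤ y := by
  have hsy : 1 ≤ √y := Real.one_le_sqrt.2 hy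
  have hx24 : x ≤ 24 * y * √y := by
    rcases hx.eq_or_lt with rfl | hpos
    · positivity
    · have : x * x ≤ ((1 + √y) * (2 + 10 * y)) * x := by nlinarith
      have := le_of_mul_le_mul_right this hpos
      nlinarith
  have hcube : x ^ 2 ≤ 576 * y ^ 3 := by
    have := pow_le_pow_left₀ hx hx24 2
    nlinarith [Real.sq_sqrt (zero_le_one.trans hy)]
  rw [← pow_le_pow_iff_left₀ (by positivity) (by positivity) three_ne_zero, mul_pow,
    ← Real.rpow_natCast (x ^ _), ← Real.rpow_mul hx]
  norm_num
  nlinarith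

/-- There is an absolute constant `δ > 0` such that for all `n ≥ 1`, every 4-colouring
of `F_n ⊠ F_n` has a monochromatic component with at least `δ·n^{2/3}` vertices. -/
theorem four_colour_fan_lower :
    ∃ δ : ℝ, 0 < δ ∧ ∀ n : ℕ, 1 ≤ n → ∀ f : Fin (n + 1) × Fin (n + 1) → Fin 4,
      ∃ S : Finset (Fin (n + 1) × Fin (n + 1)), IsMonochromatic f S ∧
        ((StrongProd (Fan n) (Fan n)).induce
          (S : Set (Fin (n + 1) × Fin (n + 1)))).Connected ∧
        δ * (n : ℝ) ^ ((2 : ℝ) / 3) ≤ (S.card : ℝ) := by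
  refine ⟨1 / 9, by norm_num, fun n _ f => ?_⟩
  obtain ⟨S, hmono, hconn, hmax⟩ := exists_clusterLE_card (StrongProd (Fan n) (Fan n)) f
  have hS : 1 ≤ S.card := card_pos.2 (coe_nonempty.1 (Set.nonempty_coe_sort.1 hconn.nonempty))
  exact ⟨S, hmono, hconn,
    one_div_nine_mul_rpow_le n.cast_nonneg (by exact_mod_cast hS) hmax.fan_sq_le⟩
end
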